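/- arXiv:1211.2156 — 7 statements merged into one kernel-verified Lean document; each statement's English description precedes it below -/
import Mathlib

section
/- Let n ≥ 1 and let φ: ℝ → ℝ be a bounded continuously differentiable function with s := sup_{x∈ℝ}|φ'(x)| < 1. Then the map x ↦ x − φ(x) is a bijection of ℝ onto ℝ, and for every real p ∈ [1, ∞) and all Borel measurable functions F, G: ℝ → ℝⁿ one has ‖F − G∘(Id−φ)⁻¹‖_{L^p(ℝ)} ≤ (1 + s)^{1/p} · ‖F∘(Id−φ) − G‖_{L^p(ℝ)}. -/
open MeasureTheory ENNReal Filter Function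

/-!
Since `|φ'| ≤ s < 1`, the map `ψ = Id - φ` is strictly increasing, and being a bounded
perturbation of the identity it tends to `±∞` at `±∞`, hence is a bijection. Writing
`H := F ∘ ψ - G`, the function `F - G ∘ ψ⁻¹` is `H ∘ ψ⁻¹`, and the substitution `x = ψ y` gives
`∫ |H ∘ ψ⁻¹|^p = ∫ |ψ'| |H|^p ≤ (1 + s) ∫ |H|^p`.
-/

lemma strictMono_id_sub_of_deriv_lt_one {φ : ℝ → ℝ} (hφ : Differentiable ℝ φ)
    (h : ∀ x, deriv φ x < 1) : StrictMono fun x => x - φ x :=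
  strictMono_of_deriv_pos fun x => by
    rw [deriv_fun_sub differentiableAt_fun_id (hφ x), deriv_id'']
    linarith [h x]

lemma surjective_id_sub_of_bounded {φ : ℝ → ℝ} (hφ : Continuous φ)
    (hbdd : ∃ M : ℝ, ∀ x, |φ x| ≤ M) : Surjective fun x => x - φ x := by
  obtain ⟨M, hM⟩ := hbdd
  have hcont : Continuous fun x => x - φ x := by fun_prop
  refine hcont.surjective ?_ ?_
  · refine tendsto_atTop_mono (fun x => ?_) (tendsto_atTop_add_const_right _ (-M) tendsto_id)
    linarith [(abs_le.1 (hM x)).2, id_eq x]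
  · refine tendsto_atBot_mono (fun x => ?_) (tendsto_atBot_add_const_right _ M tendsto_id)
    linarith [(abs_le.1 (hM x)).1, id_eq x]

lemma lintegral_le_mul_lintegral_comp {ψ ψ' : ℝ → ℝ} (hψ : ∀ x, HasDerivAt ψ (ψ' x) x)
    (hbij : Bijective ψ) {C : ℝ} (hC : ∀ x, |ψ' x| ≤ C) (g : ℝ → ℝ≥0∞) :
    ∫⁻ x, g x ≤ ENNReal.ofReal C * ∫⁻ x, g (ψ x) := by
  have hcov : ∫⁻ x, g x = ∫⁻ x, ENNReal.ofReal |ψ' x| * g (ψ x) := by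
    simpa only [Set.image_univ, hbij.2.range_eq, Measure.restrict_univ] using
      lintegral_image_eq_lintegral_abs_deriv_mul MeasurableSet.univ
        (fun x _ => (hψ x).hasDerivWithinAt) hbij.1.injOn g
  rw [hcov, ← lintegral_const_mul' _ _ ofReal_ne_top]
  exact lintegral_mono fun x => mul_le_mul_left (ofReal_le_ofReal (hC x)) _

lemma eLpNorm_comp_invFun_le {E : Type*} [NormedAddCommGroup E] {ψ ψ' : ℝ → ℝ}
    (hψ : ∀ x, HasDerivAt ψ (ψ' x) x) (hbij : Bijective ψ) {C : ℝ} (hC : ∀ x, |ψ' x| ≤ C)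
    {p : ℝ} (hp : 0 < p) (f : ℝ → E) :
    eLpNorm (f ∘ invFun ψ) (ENNReal.ofReal p) volume ≤
      ENNReal.ofReal (C ^ (1 / p)) * eLpNorm f (ENNReal.ofReal p) volume := by
  have hC0 : 0 ≤ C := (abs_nonneg _).trans (hC 0)
  have hp0 : ENNReal.ofReal p ≠ 0 := by simpa using hp
  simp only [eLpNorm_eq_lintegral_rpow_enorm_toReal hp0 ofReal_ne_top, toReal_ofReal hp.le]
  have hint : ∫⁻ x, ‖f (invFun ψ x)‖ₑ ^ p ≤ ENNReal.ofReal C * ∫⁻ x, ‖f x‖ₑ ^ p := by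
    simpa only [leftInverse_invFun hbij.1 _] using
      lintegral_le_mul_lintegral_comp hψ hbij hC fun x => ‖f (invFun ψ x)‖ₑ ^ p
  calc (∫⁻ x, ‖(f ∘ invFun ψ) x‖ₑ ^ p) ^ (1 / p)
      ≤ (ENNReal.ofReal C * ∫⁻ x, ‖f x‖ₑ ^ p) ^ (1 / p) :=
        rpow_le_rpow hint (by positivity)
    _ = ENNReal.ofReal (C ^ (1 / p)) * (∫⁻ x, ‖f x‖ₑ ^ p) ^ (1 / p) := by
        rw [mul_rpow_of_nonneg _ _ (by positivity), ofReal_rpow_of_nonneg hC0 (by positivity)]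

theorem stmt_0_general (n : ℕ) (φ : ℝ → ℝ)
    (hφ : ContDiff ℝ 1 φ) (hφbdd : ∃ M : ℝ, ∀ x, |φ x| ≤ M)
    (s : ℝ) (hs : IsLUB (Set.range fun x => |deriv φ x|) s) (hs1 : s < 1) :
    Function.Bijective (fun x : ℝ => x - φ x) ∧
      ∀ p : ℝ, 1 ≤ p → ∀ F G : ℝ → EuclideanSpace ℝ (Fin n),
        Measurable F → Measurable G →
        eLpNorm (fun x => F x - G (Function.invFun (fun y : ℝ => y - φ y) x))
            (ENNReal.ofReal p) volume ≤
          ENNReal.ofReal ((1 + s) ^ (1 / p)) *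
            eLpNorm (fun x => F (x - φ x) - G x) (ENNReal.ofReal p) volume := by
  have hφdiff : Differentiable ℝ φ := hφ.differentiable one_ne_zero
  have hbound : ∀ x, |deriv φ x| ≤ s := fun x => hs.1 ⟨x, rfl⟩
  have hbij : Bijective fun x => x - φ x :=
    ⟨(strictMono_id_sub_of_deriv_lt_one hφdiff
        fun x => (le_abs_self _).trans_lt ((hbound x).trans_lt hs1)).injective,
      surjective_id_sub_of_bounded hφ.continuous hφbdd⟩
  refine ⟨hbij, fun p hp F G _ _ => ?_⟩
  have hcomp : (fun x => F x - G (invFun (fun y => y - φ y) x)) =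
      (fun y => F (y - φ y) - G y) ∘ invFun (fun y => y - φ y) := by
    funext x
    simp only [comp_apply, rightInverse_invFun hbij.2 x]
  rw [hcomp]
  refine eLpNorm_comp_invFun_le (fun x => (hasDerivAt_id' x).sub (hφdiff x).hasDerivAt) hbij
    (fun x => ?_) (by linarith) _
  calc |1 - deriv φ x| ≤ |1| + |deriv φ x| := abs_sub _ _
    _ ≤ 1 + s := by rw [abs_one]; linarith [hbound x]

/-- inverse modulation bound, first part of Lemma `switchlem`.
If `φ : ℝ → ℝ` is bounded, `C¹`, with `s := sup |φ'| < 1`, then `x ↦ x - φ x` is a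
bijection of `ℝ`, and for every real `p ∈ [1,∞)` and Borel measurable `F G : ℝ → ℝⁿ`,
`‖F - G ∘ (Id - φ)⁻¹‖_{L^p} ≤ (1+s)^{1/p} ‖F ∘ (Id - φ) - G‖_{L^p}`. -/
theorem stmt_0 (n : ℕ) (hn : 1 ≤ n) (φ : ℝ → ℝ)
    (hφ : ContDiff ℝ 1 φ) (hφbdd : ∃ M : ℝ, ∀ x, |φ x| ≤ M)
    (s : ℝ) (hs : IsLUB (Set.range fun x => |deriv φ x|) s) (hs1 : s < 1) :
    Function.Bijective (fun x : ℝ => x - φ x) ∧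
      ∀ p : ℝ, 1 ≤ p → ∀ F G : ℝ → EuclideanSpace ℝ (Fin n),
        Measurable F → Measurable G →
        eLpNorm (fun x => F x - G (Function.invFun (fun y : ℝ => y - φ y) x))
            (ENNReal.ofReal p) volume ≤
          ENNReal.ofReal ((1 + s) ^ (1 / p)) *
            eLpNorm (fun x => F (x - φ x) - G x) (ENNReal.ofReal p) volume :=
  stmt_0_general n φ hφ hφbdd s hs hs1
end

section
/- Let n ≥ 1 and let φ: ℝ → ℝ be a bounded continuously differentiable function with s := sup_{x∈ℝ}|φ'(x)| < 1, and let φ̃: ℝ → ℝ be the function determined by (Id−φ)⁻¹ = Id + φ̃. Let F: ℝ → ℝⁿ be Borel measurable and let G: ℝ → ℝⁿ be differentiable with bounded derivative. Then for every real p ∈ [1, ∞): ‖F − G∘(Id+φ)‖_{L^p(ℝ)} ≤ (1 + s)^{1/p} ‖F∘(Id−φ) − G‖_{L^p(ℝ)} + ‖G'‖_∞ (1 + s)^{1/p} ‖φ‖_∞ ‖φ'‖_{L^p(ℝ)}. -/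
/-!
Substituting `x = y - φ y`, whose Jacobian `1 - φ'` is at most `1 + s`, bounds the left-hand side
by `(1 + s)^{1/p} ‖F∘(Id-φ) - G∘(Id+φ)∘(Id-φ)‖_p`. Split this at `G`: since
`(Id+φ)∘(Id-φ) = Id - (φ - φ∘(Id-φ))`, the second piece is at most `‖G'‖_∞ ‖φ - φ∘(Id-φ)‖_p`.
Finally `|φ y - φ (y - φ y)|` is at most the integral of `|φ'|` over an interval `I_y` of length
`≤ ‖φ‖_∞`; Hölder on `I_y` and Fubini (a point `u` lies in `I_y` only for `y` between `u` and
`(Id-φ)⁻¹ u`, by monotonicity of `Id - φ`) give `‖φ - φ∘(Id-φ)‖_p ≤ ‖φ‖_∞ ‖φ'‖_p`.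
-/

open MeasureTheory Set Function
open scoped ENNReal Interval

theorem volume_le_smul_map_of_abs_deriv_le {ψ ψ' : ℝ → ℝ} {C : ℝ}
    (hψ : ∀ x, HasDerivAt ψ (ψ' x) x) (hinj : Injective ψ) (hsurj : Surjective ψ)
    (hC : ∀ x, |ψ' x| ≤ C) :
    (volume : Measure ℝ) ≤ ENNReal.ofReal C • volume.map ψ := by
  have hψm : Measurable ψ := (continuous_iff_continuousAt.2 fun x => (hψ x).continuousAt).measurable
  refine Measure.le_iff.2 fun A hA => ?_
  have hcov := lintegral_image_eq_lintegral_abs_deriv_mul MeasurableSet.univ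
    (fun x _ => (hψ x).hasDerivWithinAt) hinj.injOn (A.indicator 1)
  rw [image_univ, hsurj.range_eq, Measure.restrict_univ, lintegral_indicator_one hA] at hcov
  rw [hcov, Measure.smul_apply, Measure.map_apply hψm hA, smul_eq_mul,
    ← lintegral_indicator_one (hψm hA), ← lintegral_const_mul' _ _ ENNReal.ofReal_ne_top]
  exact lintegral_mono fun x => mul_le_mul' (ENNReal.ofReal_le_ofReal (hC x)) le_rfl

theorem eLpNorm_le_mul_eLpNorm_comp_of_abs_deriv_le {E : Type*} [NormedAddCommGroup E] {f : ℝ → E}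
    (hf : StronglyMeasurable f) {ψ ψ' : ℝ → ℝ} {C : ℝ}
    (hψ : ∀ x, HasDerivAt ψ (ψ' x) x) (hinj : Injective ψ) (hsurj : Surjective ψ)
    (hC : ∀ x, |ψ' x| ≤ C) {p : ℝ≥0∞} (hp : p ≠ ∞) :
    eLpNorm f p volume ≤ ENNReal.ofReal C ^ (1 / p).toReal * eLpNorm (f ∘ ψ) p volume := by
  have hψm : Measurable ψ := (continuous_iff_continuousAt.2 fun x => (hψ x).continuousAt).measurable
  calc eLpNorm f p volume ≤ eLpNorm f p (ENNReal.ofReal C • volume.map ψ) :=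
        eLpNorm_mono_measure f (volume_le_smul_map_of_abs_deriv_le hψ hinj hsurj hC)
    _ = ENNReal.ofReal C ^ (1 / p).toReal * eLpNorm (f ∘ ψ) p volume := by
        rw [eLpNorm_smul_measure_of_ne_top hp, eLpNorm_map_measure hf.aestronglyMeasurable
          hψm.aemeasurable, smul_eq_mul]

theorem strictMono_sub_of_abs_deriv_le {φ : ℝ → ℝ} (hφ : Differentiable ℝ φ) {s : ℝ}
    (hs : ∀ x, |deriv φ x| ≤ s) (hs1 : s < 1) : StrictMono fun y => y - φ y :=
  strictMono_of_hasDerivAt_pos (fun x => (hasDerivAt_id x).sub (hφ x).hasDerivAt) fun x => by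
    linarith [le_abs_self (deriv φ x), hs x]

theorem eLpNorm_le_mul_eLpNorm_comp_id_sub {E : Type*} [NormedAddCommGroup E] {f : ℝ → E}
    (hf : StronglyMeasurable f) {φ : ℝ → ℝ} (hφ : Differentiable ℝ φ) {s : ℝ}
    (hs : ∀ x, |deriv φ x| ≤ s) (hs1 : s < 1) (hsurj : Surjective fun y => y - φ y) {p : ℝ}
    (hp : 0 < p) :
    eLpNorm f (ENNReal.ofReal p) volume ≤
      ENNReal.ofReal ((1 + s) ^ (1 / p)) *
        eLpNorm (fun y => f (y - φ y)) (ENNReal.ofReal p) volume := by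
  have hs0 : 0 ≤ s := (abs_nonneg _).trans (hs 0)
  have hderiv : ∀ x, |1 - deriv φ x| ≤ 1 + s := fun x =>
    abs_le.2 ⟨by linarith [le_abs_self (deriv φ x), hs x],
      by linarith [neg_abs_le (deriv φ x), hs x]⟩
  have := eLpNorm_le_mul_eLpNorm_comp_of_abs_deriv_le hf
    (fun x => (hasDerivAt_id x).sub (hφ x).hasDerivAt)
    (strictMono_sub_of_abs_deriv_le hφ hs hs1).injective hsurj hderiv (p := ENNReal.ofReal p)
    ENNReal.ofReal_ne_top
  rwa [ENNReal.ofReal_rpow_of_nonneg (by positivity) (by positivity), one_div, ENNReal.toReal_inv,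
    ENNReal.toReal_ofReal hp.le, ← one_div] at this

theorem eLpNorm_comp_sub_comp_le_of_norm_deriv_le {α : Type*} [MeasurableSpace α]
    {μ : Measure α} {E : Type*} [NormedAddCommGroup E] [NormedSpace ℝ E] {G : ℝ → E} (hG : Differentiable ℝ G) {C : ℝ}
    (hC : ∀ x, ‖deriv G x‖ ≤ C) (a b : α → ℝ) (p : ℝ≥0∞) :
    eLpNorm (fun x => G (a x) - G (b x)) p μ ≤
      ENNReal.ofReal C * eLpNorm (fun x => a x - b x) p μ :=
  eLpNorm_le_mul_eLpNorm_of_ae_le_mul (ae_of_all _ fun x =>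
    convex_univ.norm_image_sub_le_of_norm_deriv_le (fun y _ => hG y) (fun y _ => hC y)
      (mem_univ (b x)) (mem_univ (a x))) p

theorem eLpNorm_sub_comp_sub_le_add {α : Type*} [MeasurableSpace α] {μ : Measure α} {E : Type*}
    [NormedAddCommGroup E] [NormedSpace ℝ E] {F : α → E} (hF : AEStronglyMeasurable F μ)
    {G : ℝ → E} (hG : Differentiable ℝ G) {C : ℝ} (hC : ∀ x, ‖deriv G x‖ ≤ C) {a d : α → ℝ}
    (ha : Measurable a) (hd : Measurable d) {p : ℝ≥0∞} (hp : 1 ≤ p) :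
    eLpNorm (fun x => F x - G (a x - d x)) p μ ≤
      eLpNorm (fun x => F x - G (a x)) p μ + ENNReal.ofReal C * eLpNorm d p μ := by
  have hGa : AEStronglyMeasurable (fun x => G (a x)) μ :=
    hG.continuous.comp_aestronglyMeasurable ha.aestronglyMeasurable
  have hGad : AEStronglyMeasurable (fun x => G (a x - d x)) μ :=
    hG.continuous.comp_aestronglyMeasurable (ha.sub hd).aestronglyMeasurable
  calc eLpNorm (fun x => F x - G (a x - d x)) p μ
      = eLpNorm ((fun x => F x - G (a x)) + fun x => G (a x) - G (a x - d x)) p μ := by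
        simp only [Pi.add_def, sub_add_sub_cancel]
    _ ≤ eLpNorm (fun x => F x - G (a x)) p μ + eLpNorm (fun x => G (a x) - G (a x - d x)) p μ :=
        eLpNorm_add_le (hF.sub hGa) (hGa.sub hGad) hp
    _ ≤ eLpNorm (fun x => F x - G (a x)) p μ + ENNReal.ofReal C * eLpNorm d p μ := by
        gcongr
        simpa only [sub_sub_cancel] using
          eLpNorm_comp_sub_comp_le_of_norm_deriv_le hG hC a (fun x => a x - d x) p

theorem enorm_sub_rpow_le_of_contDiff {E : Type*} [NormedAddCommGroup E] [NormedSpace ℝ E]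
    [CompleteSpace E] {f : ℝ → E} (hf : ContDiff ℝ 1 f) (a b : ℝ) {p : ℝ} (hp : 1 ≤ p) :
    ‖f b - f a‖ₑ ^ p ≤
      ENNReal.ofReal |b - a| ^ (p - 1) * ∫⁻ u in Ι a b, ‖deriv f u‖ₑ ^ p := by
  have hp0 : 0 < p := zero_lt_one.trans_le hp
  have hf' : Continuous (deriv f) := hf.continuous_deriv le_rfl
  set μ := volume.restrict (Ι a b)
  have hftc : ‖f b - f a‖ₑ ≤ ∫⁻ u in Ι a b, ‖deriv f u‖ₑ := by
    rw [← intervalIntegral.integral_deriv_eq_sub (fun x _ => hf.differentiable one_ne_zero x)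
      (hf'.intervalIntegrable _ _), ← ofReal_norm,
      intervalIntegral.norm_integral_eq_norm_integral_uIoc, ofReal_norm]
    exact enorm_integral_le_lintegral_enorm _
  have hholder : ∫⁻ u in Ι a b, ‖deriv f u‖ₑ ≤
      eLpNorm (deriv f) (ENNReal.ofReal p) μ * μ univ ^ (1 - 1 / p) := by
    simpa [eLpNorm_one_eq_lintegral_enorm, ENNReal.toReal_ofReal hp0.le] using
      eLpNorm_le_eLpNorm_mul_rpow_measure_univ (p := 1) (μ := μ)
        (ENNReal.one_le_ofReal.2 hp) hf'.aestronglyMeasurable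
  calc ‖f b - f a‖ₑ ^ p
      ≤ (eLpNorm (deriv f) (ENNReal.ofReal p) μ * μ univ ^ (1 - 1 / p)) ^ p :=
        ENNReal.rpow_le_rpow (hftc.trans hholder) hp0.le
    _ = ENNReal.ofReal |b - a| ^ (p - 1) * ∫⁻ u in Ι a b, ‖deriv f u‖ₑ ^ p := by
        rw [ENNReal.mul_rpow_of_nonneg _ _ hp0.le, ← ENNReal.rpow_mul, mul_comm,
          eLpNorm_eq_lintegral_rpow_enorm_toReal (by simpa using hp0) ENNReal.ofReal_ne_top,
          ENNReal.toReal_ofReal hp0.le, one_div, ENNReal.rpow_inv_rpow hp0.ne',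
          Measure.restrict_apply_univ, Real.volume_uIoc, sub_mul, inv_mul_cancel₀ hp0.ne', one_mul]

theorem lintegral_setLIntegral_le_mul_of_measure_section_le {α β : Type*} [MeasurableSpace α]
    [MeasurableSpace β] {μ : Measure α} {ν : Measure β} [SFinite μ] [SFinite ν]
    {S : Set (α × β)} (hS : MeasurableSet S) {g : β → ℝ≥0∞} (hg : Measurable g) {M : ℝ≥0∞}
    (hM : ∀ b, μ {a | (a, b) ∈ S} ≤ M) :
    ∫⁻ a, ∫⁻ b in {b | (a, b) ∈ S}, g b ∂ν ∂μ ≤ M * ∫⁻ b, g b ∂ν :=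
  calc ∫⁻ a, ∫⁻ b in {b | (a, b) ∈ S}, g b ∂ν ∂μ
      = ∫⁻ a, ∫⁻ b, S.indicator (fun q => g q.2) (a, b) ∂ν ∂μ :=
        lintegral_congr fun a => (lintegral_indicator (measurable_prodMk_left hS) g).symm
    _ = ∫⁻ b, ∫⁻ a, S.indicator (fun q => g q.2) (a, b) ∂μ ∂ν :=
        lintegral_lintegral_swap ((hg.comp measurable_snd).indicator hS).aemeasurable
    _ = ∫⁻ b, g b * μ {a | (a, b) ∈ S} ∂ν :=
        lintegral_congr fun b => lintegral_indicator_const (measurable_prodMk_right hS) (g b)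
    _ ≤ ∫⁻ b, M * g b ∂ν := lintegral_mono fun b => by rw [mul_comm]; gcongr; exact hM b
    _ = M * ∫⁻ b, g b ∂ν := lintegral_const_mul M hg

theorem eLpNorm_sub_comp_le_of_contDiff {E : Type*} [NormedAddCommGroup E] [NormedSpace ℝ E]
    [CompleteSpace E] {f : ℝ → E} (hf : ContDiff ℝ 1 f) {ψ : ℝ → ℝ} (hψ : StrictMono ψ)
    (hsurj : Surjective ψ) {M : ℝ} (hM : ∀ y, |y - ψ y| ≤ M) {p : ℝ≥0∞} (hp1 : 1 ≤ p)
    (hp : p ≠ ∞) :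
    eLpNorm (fun y => f y - f (ψ y)) p volume ≤ ENNReal.ofReal M * eLpNorm (deriv f) p volume := by
  set q := p.toReal
  have hq : 1 ≤ q := by simpa using ENNReal.toReal_mono hp hp1
  have hq0 : 0 < q := zero_lt_one.trans_le hq
  set g : ℝ → ℝ≥0∞ := fun u => ‖deriv f u‖ₑ ^ q
  have hg : Measurable g := (hf.continuous_deriv le_rfl).enorm.measurable.pow_const q
  have hpoint : ∀ y, ‖f y - f (ψ y)‖ₑ ^ q ≤
      ENNReal.ofReal M ^ (q - 1) * ∫⁻ u in Ι (ψ y) y, g u := fun y =>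
    (enorm_sub_rpow_le_of_contDiff hf (ψ y) y hq).trans
      (by gcongr; exact hM y)
  have hS : MeasurableSet {z : ℝ × ℝ | z.2 ∈ Ι (ψ z.1) z.1} :=
    (measurableSet_lt ((hψ.monotone.measurable.comp measurable_fst).min measurable_fst)
      measurable_snd).inter
    (measurableSet_le measurable_snd
      ((hψ.monotone.measurable.comp measurable_fst).max measurable_fst))
  have hsection : ∀ u, volume {y | u ∈ Ι (ψ y) y} ≤ ENNReal.ofReal M := by
    intro u
    obtain ⟨v, rfl⟩ := hsurj u
    have hsub : {y | ψ v ∈ Ι (ψ y) y} ⊆ [[ψ v, v]] := by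
      intro y hy
      rcases mem_uIcc.1 (uIoc_subset_uIcc hy) with ⟨h₁, h₂⟩ | ⟨h₁, h₂⟩
      · exact mem_uIcc.2 (Or.inl ⟨h₂, hψ.le_iff_le.1 h₁⟩)
      · exact mem_uIcc.2 (Or.inr ⟨hψ.le_iff_le.1 h₂, h₁⟩)
    calc volume {y | ψ v ∈ Ι (ψ y) y} ≤ volume [[ψ v, v]] := measure_mono hsub
      _ = ENNReal.ofReal |v - ψ v| := Real.volume_interval
      _ ≤ ENNReal.ofReal M := ENNReal.ofReal_le_ofReal (hM v)
  have hlint : ∫⁻ y, ‖f y - f (ψ y)‖ₑ ^ q ≤ ENNReal.ofReal M ^ q * ∫⁻ u, g u :=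
    calc ∫⁻ y, ‖f y - f (ψ y)‖ₑ ^ q
        ≤ ∫⁻ y, ENNReal.ofReal M ^ (q - 1) * ∫⁻ u in Ι (ψ y) y, g u := lintegral_mono hpoint
      _ = ENNReal.ofReal M ^ (q - 1) * ∫⁻ y, ∫⁻ u in Ι (ψ y) y, g u :=
        lintegral_const_mul' _ _
          (ENNReal.rpow_ne_top_of_nonneg (sub_nonneg.2 hq) ENNReal.ofReal_ne_top)
      _ ≤ ENNReal.ofReal M ^ (q - 1) * (ENNReal.ofReal M * ∫⁻ u, g u) := by
        gcongr
        exact lintegral_setLIntegral_le_mul_of_measure_section_le hS hg hsection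
      _ = ENNReal.ofReal M ^ q * ∫⁻ u, g u := by
        conv_rhs => rw [← sub_add_cancel q 1,
          ENNReal.rpow_add_of_nonneg _ _ (sub_nonneg.2 hq) zero_le_one, ENNReal.rpow_one]
        rw [mul_assoc]
  have hp0 : p ≠ 0 := (zero_lt_one.trans_le hp1).ne'
  rw [eLpNorm_eq_lintegral_rpow_enorm_toReal hp0 hp, eLpNorm_eq_lintegral_rpow_enorm_toReal hp0 hp]
  calc (∫⁻ y, ‖f y - f (ψ y)‖ₑ ^ q) ^ (1 / q) ≤ (ENNReal.ofReal M ^ q * ∫⁻ u, g u) ^ (1 / q) :=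
        ENNReal.rpow_le_rpow hlint (by positivity)
    _ = ENNReal.ofReal M * (∫⁻ u, g u) ^ (1 / q) := by
        rw [ENNReal.mul_rpow_of_nonneg _ _ (by positivity), one_div,
          ENNReal.rpow_rpow_inv hq0.ne']

theorem stmt_1_general (n : ℕ) (φ φt : ℝ → ℝ)
    (hφ : ContDiff ℝ 1 φ)
    (s : ℝ) (hs : IsLUB (Set.range fun x => |deriv φ x|) s) (hs1 : s < 1)
    (sφ : ℝ) (hsφ : IsLUB (Set.range fun x => |φ x|) sφ)
    (hinv1 : ∀ x : ℝ, (x + φt x) - φ (x + φt x) = x)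
    (F : ℝ → EuclideanSpace ℝ (Fin n)) (hF : Measurable F)
    (G : ℝ → EuclideanSpace ℝ (Fin n)) (hG : Differentiable ℝ G)
    (sG : ℝ) (hsG : IsLUB (Set.range fun x => ‖deriv G x‖) sG)
    (p : ℝ) (hp : 1 ≤ p) :
    eLpNorm (fun x => F x - G (x + φ x)) (ENNReal.ofReal p) volume ≤
      ENNReal.ofReal ((1 + s) ^ (1 / p)) *
        eLpNorm (fun x => F (x - φ x) - G x) (ENNReal.ofReal p) volume +
      ENNReal.ofReal (sG * (1 + s) ^ (1 / p) * sφ) *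
        eLpNorm (fun x => deriv φ x) (ENNReal.ofReal p) volume := by
  have hφ' : ∀ x, |deriv φ x| ≤ s := fun x => hs.1 ⟨x, rfl⟩
  have hG' : ∀ x, ‖deriv G x‖ ≤ sG := fun x => hsG.1 ⟨x, rfl⟩
  have hs0 : 0 ≤ s := (abs_nonneg _).trans (hφ' 0)
  have hsG0 : 0 ≤ sG := (norm_nonneg _).trans (hG' 0)
  have hφd : Differentiable ℝ φ := hφ.differentiable one_ne_zero
  set ψ : ℝ → ℝ := fun y => y - φ y
  have hψ : StrictMono ψ := strictMono_sub_of_abs_deriv_le hφd hφ' hs1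
  have hsurj : Surjective ψ := fun x => ⟨x + φt x, hinv1 x⟩
  have hφm : Measurable φ := hφd.continuous.measurable
  have hψm : Measurable ψ := hψ.monotone.measurable
  have hH : Measurable fun x => F x - G (x + φ x) :=
    hF.sub (hG.continuous.measurable.comp (measurable_id.add hφm))
  have hcov := eLpNorm_le_mul_eLpNorm_comp_id_sub hH.stronglyMeasurable hφd hφ' hs1 hsurj
    (zero_lt_one.trans_le hp)
  have hsplit := eLpNorm_sub_comp_sub_le_add (μ := volume)
    (hF.comp hψm).aestronglyMeasurable hG hG' measurable_id' (hφm.sub (hφm.comp hψm))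
    (ENNReal.one_le_ofReal.2 hp) (d := fun y => φ y - φ (ψ y))
  have hshift := eLpNorm_sub_comp_le_of_contDiff hφ hψ hsurj (M := sφ)
    (fun y => by simpa [ψ] using hsφ.1 ⟨y, rfl⟩) (ENNReal.one_le_ofReal.2 hp) ENNReal.ofReal_ne_top
  calc eLpNorm (fun x => F x - G (x + φ x)) (ENNReal.ofReal p) volume
      ≤ ENNReal.ofReal ((1 + s) ^ (1 / p)) *
          eLpNorm (fun y => F (ψ y) - G (y - (φ y - φ (ψ y)))) (ENNReal.ofReal p) volume := by
        convert hcov using 6 with y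
        simp only [ψ]
        ring
    _ ≤ ENNReal.ofReal ((1 + s) ^ (1 / p)) *
          (eLpNorm (fun y => F (ψ y) - G y) (ENNReal.ofReal p) volume + ENNReal.ofReal sG *
            (ENNReal.ofReal sφ * eLpNorm (deriv φ) (ENNReal.ofReal p) volume)) := by
        gcongr
        exact hsplit.trans (add_le_add_right (mul_le_mul_right hshift _) _)
    _ = ENNReal.ofReal ((1 + s) ^ (1 / p)) *
          eLpNorm (fun x => F (x - φ x) - G x) (ENNReal.ofReal p) volume +
        ENNReal.ofReal (sG * (1 + s) ^ (1 / p) * sφ) *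
          eLpNorm (fun x => deriv φ x) (ENNReal.ofReal p) volume := by
        rw [mul_add, ENNReal.ofReal_mul (by positivity), ENNReal.ofReal_mul hsG0]
        congr 1
        ring

/-- inverse modulation bound, second part of Lemma `switchlem`.
With `φ̃` determined by `(Id - φ)⁻¹ = Id + φ̃`, for measurable `F` and differentiable `G`
with bounded derivative:
`‖F - G∘(Id+φ)‖_{L^p} ≤ (1+s)^{1/p} ‖F∘(Id-φ) - G‖_{L^p}
  + ‖G'‖_∞ (1+s)^{1/p} ‖φ‖_∞ ‖φ'‖_{L^p}`. -/
theorem stmt_1 (n : ℕ) (hn : 1 ≤ n) (φ φt : ℝ → ℝ)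
    (hφ : ContDiff ℝ 1 φ)
    (s : ℝ) (hs : IsLUB (Set.range fun x => |deriv φ x|) s) (hs1 : s < 1)
    (sφ : ℝ) (hsφ : IsLUB (Set.range fun x => |φ x|) sφ)
    (hinv1 : ∀ x : ℝ, (x + φt x) - φ (x + φt x) = x)
    (hinv2 : ∀ x : ℝ, (x - φ x) + φt (x - φ x) = x)
    (F : ℝ → EuclideanSpace ℝ (Fin n)) (hF : Measurable F)
    (G : ℝ → EuclideanSpace ℝ (Fin n)) (hG : Differentiable ℝ G)
    (sG : ℝ) (hsG : IsLUB (Set.range fun x => ‖deriv G x‖) sG)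
    (p : ℝ) (hp : 1 ≤ p) :
    eLpNorm (fun x => F x - G (x + φ x)) (ENNReal.ofReal p) volume ≤
      ENNReal.ofReal ((1 + s) ^ (1 / p)) *
        eLpNorm (fun x => F (x - φ x) - G x) (ENNReal.ofReal p) volume +
      ENNReal.ofReal (sG * (1 + s) ^ (1 / p) * sφ) *
        eLpNorm (fun x => deriv φ x) (ENNReal.ofReal p) volume :=
  stmt_1_general n φ φt hφ s hs hs1 sφ hsφ hinv1 F hF G hG sG hsG p hp
end

section
/- Let φ: ℝ → ℝ be a bounded continuously differentiable function with s := sup_{x∈ℝ}|φ'(x)| < 1, and let φ̃: ℝ → ℝ be the function determined by (Id−φ)⁻¹ = Id + φ̃ (equivalently, φ̃ = φ∘(Id+φ̃)). Then ‖φ̃‖_∞ ≤ ‖φ‖_∞, and for every real p ∈ [1, ∞): ‖φ̃ − φ‖_{L^p(ℝ)} ≤ ‖φ‖_∞ (1 + s)^{1/p} ‖φ'‖_{L^p(ℝ)}. -/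
/-!
Since `|φ'| ≤ s < 1`, the map `Id - φ` is monotone, with inverse `Id + φ̃`; so `φ̃ = φ ∘ (Id + φ̃)`
gives `‖φ̃‖_∞ ≤ ‖φ‖_∞`, and `φ̃ x - φ x = φ (x + φ̃ x) - φ x` is bounded by the integral of `|φ'|`
over the interval `I x` between `x` and `x + φ̃ x`, of length at most `‖φ‖_∞`. By Hölder on `I x`
and Fubini, `‖φ̃ - φ‖_p^p ≤ ‖φ‖_∞^(p-1) ∫ |φ' t|^p |{x | t ∈ I x}| dt`, and monotonicity of `Id - φ`
puts `{x | t ∈ I x}` inside the interval between `t - φ t` and `t`, again of length at most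
`‖φ‖_∞`. This gives the bound with constant `‖φ‖_∞ ≤ ‖φ‖_∞ (1 + s)^(1/p)`.
-/

open MeasureTheory Set
open scoped ENNReal

theorem rpow_lintegral_le_measure_univ_rpow_mul {α : Type*} [MeasurableSpace α] {μ : Measure α}
    {g : α → ℝ≥0∞} (hg : AEMeasurable g μ) {r : ℝ} (hr : 1 ≤ r) :
    (∫⁻ a, g a ∂μ) ^ r ≤ μ univ ^ (r - 1) * ∫⁻ a, g a ^ r ∂μ := by
  have hr0 : 0 < r := zero_lt_one.trans_le hr
  have h := eLpNorm'_le_eLpNorm'_mul_rpow_measure_univ zero_lt_one hr hg.aestronglyMeasurable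
  simp only [eLpNorm', enorm_eq_self, ENNReal.rpow_one, div_one] at h
  calc (∫⁻ a, g a ∂μ) ^ r
      ≤ ((∫⁻ a, g a ^ r ∂μ) ^ (1 / r) * μ univ ^ (1 - 1 / r)) ^ r := by gcongr
    _ = μ univ ^ (r - 1) * ∫⁻ a, g a ^ r ∂μ := by
      rw [ENNReal.mul_rpow_of_nonneg _ _ hr0.le, ← ENNReal.rpow_mul, ← ENNReal.rpow_mul,
        one_div_mul_cancel hr0.ne', ENNReal.rpow_one, mul_comm]
      congr 2
      field_simp

theorem lintegral_setLIntegral_slice_eq {α β : Type*} [MeasurableSpace α] [MeasurableSpace β]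
    {μ : Measure α} {ν : Measure β} [SFinite μ] [SFinite ν] {S : Set (α × β)}
    (hS : MeasurableSet S) {g : β → ℝ≥0∞} (hg : Measurable g) :
    ∫⁻ x, ∫⁻ y in Prod.mk x ⁻¹' S, g y ∂ν ∂μ = ∫⁻ y, g y * μ ((·, y) ⁻¹' S) ∂ν := by
  have hind : ∀ x y, (Prod.mk x ⁻¹' S).indicator g y = ((·, y) ⁻¹' S).indicator (fun _ => g y) x :=
    fun _ _ => rfl
  simp_rw [← lintegral_indicator (measurable_prodMk_left hS), hind]
  rw [lintegral_lintegral_swap]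
  · simp_rw [lintegral_indicator_const (measurable_prodMk_right hS)]
  · exact ((hg.comp measurable_snd).indicator hS).aemeasurable

/-- Schur's test for the kernel `𝟙_S`. -/
theorem eLpNorm_le_mul_eLpNorm_of_le_setLIntegral_slice {α β E : Type*} [MeasurableSpace α]
    [MeasurableSpace β] {μ : Measure α} {ν : Measure β} [SFinite μ] [SFinite ν]
    [NormedAddCommGroup E] {S : Set (α × β)} (hS : MeasurableSet S) {g : β → ℝ≥0∞}
    (hg : Measurable g) {C : ℝ≥0∞} (hC_top : C ≠ ∞)
    (hC_left : ∀ x, ν (Prod.mk x ⁻¹' S) ≤ C) (hC_right : ∀ y, μ ((·, y) ⁻¹' S) ≤ C)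
    {u : α → E} (hu : ∀ x, ‖u x‖ₑ ≤ ∫⁻ y in Prod.mk x ⁻¹' S, g y ∂ν)
    {p : ℝ≥0∞} (hp : 1 ≤ p) (hp_top : p ≠ ∞) :
    eLpNorm u p μ ≤ C * eLpNorm g p ν := by
  set r := p.toReal
  have hr : 1 ≤ r := ENNReal.toReal_one ▸ ENNReal.toReal_mono hp_top hp
  have hr0 : 0 < r := zero_lt_one.trans_le hr
  have hp0 : p ≠ 0 := (zero_lt_one.trans_le hp).ne'
  have hCr : C ^ (r - 1) * C = C ^ r := by
    conv_rhs => rw [← sub_add_cancel r 1]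
    rw [ENNReal.rpow_add_of_nonneg _ _ (by linarith) zero_le_one, ENNReal.rpow_one]
  have hpointwise : ∀ x, ‖u x‖ₑ ^ r ≤ C ^ (r - 1) * ∫⁻ y in Prod.mk x ⁻¹' S, g y ^ r ∂ν := by
    intro x
    calc ‖u x‖ₑ ^ r ≤ (∫⁻ y in Prod.mk x ⁻¹' S, g y ∂ν) ^ r := by gcongr; exact hu x
      _ ≤ ν (Prod.mk x ⁻¹' S) ^ (r - 1) * ∫⁻ y in Prod.mk x ⁻¹' S, g y ^ r ∂ν := by
        simpa using rpow_lintegral_le_measure_univ_rpow_mul hg.aemeasurable hr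
          (μ := ν.restrict (Prod.mk x ⁻¹' S))
      _ ≤ C ^ (r - 1) * ∫⁻ y in Prod.mk x ⁻¹' S, g y ^ r ∂ν := by
        gcongr
        exact hC_left x
  rw [eLpNorm_eq_eLpNorm' hp0 hp_top, eLpNorm_eq_eLpNorm' hp0 hp_top,
    ← ENNReal.rpow_le_rpow_iff hr0, ENNReal.mul_rpow_of_nonneg _ _ hr0.le,
    ← lintegral_rpow_enorm_eq_rpow_eLpNorm' hr0, ← lintegral_rpow_enorm_eq_rpow_eLpNorm' hr0]
  simp only [enorm_eq_self]
  calc ∫⁻ x, ‖u x‖ₑ ^ r ∂μ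
      ≤ ∫⁻ x, C ^ (r - 1) * ∫⁻ y in Prod.mk x ⁻¹' S, g y ^ r ∂ν ∂μ := lintegral_mono hpointwise
    _ = C ^ (r - 1) * ∫⁻ y, g y ^ r * μ ((·, y) ⁻¹' S) ∂ν := by
      rw [lintegral_const_mul' _ _ (by finiteness),
        lintegral_setLIntegral_slice_eq hS (hg.pow_const r)]
    _ ≤ C ^ (r - 1) * ∫⁻ y, g y ^ r * C ∂ν := by gcongr with y; exact hC_right y
    _ = C ^ r * ∫⁻ y, g y ^ r ∂ν := by
      rw [lintegral_mul_const' _ _ hC_top, ← mul_assoc, mul_comm _ C, ← mul_assoc, mul_comm C, hCr]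

theorem Function.LeftInverse.monotone {α β : Type*} [LinearOrder α] [LinearOrder β]
    {g : α → β} {h : β → α} (hgh : Function.LeftInverse g h) (hg : Monotone g) : Monotone h := by
  intro a b hab
  by_contra! hlt
  have hba : b ≤ a := by simpa only [hgh a, hgh b] using hg hlt.le
  exact hlt.ne (congrArg h (le_antisymm hab hba)).symm

theorem Function.LeftInverse.mem_uIcc_of_mem_uIcc {α : Type*} [LinearOrder α] {g h : α → α}
    (hgh : Function.LeftInverse g h) (hg : Monotone g) {x t : α} (ht : t ∈ uIcc x (h x)) :
    x ∈ uIcc (g t) t := by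
  rcases le_total x (h x) with hx | hx
  · rw [uIcc_of_le hx] at ht
    exact mem_uIcc_of_le (hgh x ▸ hg ht.2) ht.1
  · rw [uIcc_of_ge hx] at ht
    exact mem_uIcc_of_ge ht.2 (hgh x ▸ hg ht.1)

theorem eLpNorm_le_ofReal_mul_eLpNorm_of_le_lintegral_uIcc {E : Type*} [NormedAddCommGroup E]
    {g h : ℝ → ℝ} (hgh : Function.LeftInverse g h) (hg : Monotone g) {C : ℝ}
    (hh_le : ∀ x, |h x - x| ≤ C) (hg_le : ∀ t, |t - g t| ≤ C)
    {f : ℝ → ℝ≥0∞} (hf : Measurable f) {u : ℝ → E}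
    (hu : ∀ x, ‖u x‖ₑ ≤ ∫⁻ t in uIcc x (h x), f t) {p : ℝ≥0∞} (hp : 1 ≤ p) (hp_top : p ≠ ∞) :
    eLpNorm u p ≤ ENNReal.ofReal C * eLpNorm f p := by
  have hh : Measurable h := (hgh.monotone hg).measurable
  have hS : MeasurableSet {q : ℝ × ℝ | q.2 ∈ uIcc q.1 (h q.1)} :=
    (measurableSet_le (measurable_fst.min (hh.comp measurable_fst)) measurable_snd).inter
      (measurableSet_le measurable_snd (measurable_fst.max (hh.comp measurable_fst)))
  refine eLpNorm_le_mul_eLpNorm_of_le_setLIntegral_slice hS hf ENNReal.ofReal_ne_top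
    (fun x => ?_) (fun t => ?_) hu hp hp_top
  · change volume (uIcc x (h x)) ≤ _
    rw [Real.volume_interval]
    exact ENNReal.ofReal_le_ofReal (hh_le x)
  · calc volume ((·, t) ⁻¹' {q : ℝ × ℝ | q.2 ∈ uIcc q.1 (h q.1)})
        ≤ volume (uIcc (g t) t) := measure_mono fun x hx => hgh.mem_uIcc_of_mem_uIcc hg hx
      _ ≤ ENNReal.ofReal C := by
        rw [Real.volume_interval]
        exact ENNReal.ofReal_le_ofReal (hg_le t)

theorem enorm_sub_le_lintegral_deriv_uIcc {E : Type*} [NormedAddCommGroup E] [NormedSpace ℝ E]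
    {f : ℝ → E} (hf : ContDiff ℝ 1 f) (a b : ℝ) :
    ‖f b - f a‖ₑ ≤ ∫⁻ x in uIcc a b, ‖deriv f x‖ₑ := by
  rcases le_total a b with hab | hba
  · rw [uIcc_of_le hab]
    exact enorm_sub_le_lintegral_deriv_of_contDiffOn_Icc hf.contDiffOn hab
  · rw [uIcc_of_ge hba, enorm_sub_rev]
    exact enorm_sub_le_lintegral_deriv_of_contDiffOn_Icc hf.contDiffOn hba

theorem monotone_id_sub_of_deriv_le_one {f : ℝ → ℝ} (hf : Differentiable ℝ f)
    (hf' : ∀ x, deriv f x ≤ 1) : Monotone fun x => x - f x := by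
  refine monotone_of_deriv_nonneg (differentiable_id.sub hf) fun x => ?_
  rw [deriv_fun_sub differentiableAt_fun_id (hf x), deriv_id'']
  linarith [hf' x]

theorem stmt_2_general (φ φt : ℝ → ℝ)
    (hφ : ContDiff ℝ 1 φ)
    (s : ℝ) (hs : IsLUB (Set.range fun x => |deriv φ x|) s) (hs1 : s < 1)
    (sφ : ℝ) (hsφ : IsLUB (Set.range fun x => |φ x|) sφ)
    (hinv1 : ∀ x : ℝ, (x + φt x) - φ (x + φt x) = x) :
    (∀ x, |φt x| ≤ sφ) ∧
      ∀ p : ℝ, 1 ≤ p →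
        eLpNorm (fun x => φt x - φ x) (ENNReal.ofReal p) volume ≤
          ENNReal.ofReal (sφ * (1 + s) ^ (1 / p)) *
            eLpNorm (fun x => deriv φ x) (ENNReal.ofReal p) volume := by
  have hφ'_le (x : ℝ) : |deriv φ x| ≤ s := hs.1 ⟨x, rfl⟩
  have hφ_le (x : ℝ) : |φ x| ≤ sφ := hsφ.1 ⟨x, rfl⟩
  have hφt (x : ℝ) : φt x = φ (x + φt x) := by linarith [hinv1 x]
  have hφt_le (x : ℝ) : |φt x| ≤ sφ := hφt x ▸ hφ_le _
  refine ⟨hφt_le, fun p hp => ?_⟩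
  have hg : Monotone fun x => x - φ x :=
    monotone_id_sub_of_deriv_le_one (hφ.differentiable one_ne_zero)
      fun x => by linarith [(abs_le.1 (hφ'_le x)).2]
  have hs0 : 0 ≤ s := (abs_nonneg _).trans (hφ'_le 0)
  calc eLpNorm (fun x => φt x - φ x) (ENNReal.ofReal p) volume
      ≤ ENNReal.ofReal sφ * eLpNorm (fun x => deriv φ x) (ENNReal.ofReal p) volume := by
        simpa only [eLpNorm_enorm] using
          eLpNorm_le_ofReal_mul_eLpNorm_of_le_lintegral_uIcc (g := fun x => x - φ x)
            (h := fun x => x + φt x) hinv1 hg (by simpa using hφt_le) (by simpa using hφ_le)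
            (measurable_deriv φ).enorm (u := fun x => φt x - φ x)
            (fun x => by
              simpa only [← hφt x] using enorm_sub_le_lintegral_deriv_uIcc hφ x (x + φt x))
            (by simpa using hp) ENNReal.ofReal_ne_top
    _ ≤ ENNReal.ofReal (sφ * (1 + s) ^ (1 / p)) *
          eLpNorm (fun x => deriv φ x) (ENNReal.ofReal p) volume := by
        gcongr
        exact le_mul_of_one_le_right ((abs_nonneg _).trans (hφ_le 0))
          (Real.one_le_rpow (by linarith) (by positivity))

/-- bounds on the inverse phase `φ̃`, from the proof of Lemma `switchlem`.
With `φ̃` determined by `(Id - φ)⁻¹ = Id + φ̃`: `‖φ̃‖_∞ ≤ ‖φ‖_∞` and, for `1 ≤ p < ∞`,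
`‖φ̃ - φ‖_{L^p} ≤ ‖φ‖_∞ (1+s)^{1/p} ‖φ'‖_{L^p}`. -/
theorem stmt_2 (φ φt : ℝ → ℝ)
    (hφ : ContDiff ℝ 1 φ)
    (s : ℝ) (hs : IsLUB (Set.range fun x => |deriv φ x|) s) (hs1 : s < 1)
    (sφ : ℝ) (hsφ : IsLUB (Set.range fun x => |φ x|) sφ)
    (hinv1 : ∀ x : ℝ, (x + φt x) - φ (x + φt x) = x)
    (hinv2 : ∀ x : ℝ, (x - φ x) + φt (x - φ x) = x) :
    (∀ x, |φt x| ≤ sφ) ∧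
      ∀ p : ℝ, 1 ≤ p →
        eLpNorm (fun x => φt x - φ x) (ENNReal.ofReal p) volume ≤
          ENNReal.ofReal (sφ * (1 + s) ^ (1 / p)) *
            eLpNorm (fun x => deriv φ x) (ENNReal.ofReal p) volume :=
  stmt_2_general φ φt hφ s hs hs1 sφ hsφ hinv1
end

section
/- Let g: ℝ → ℂ be a Schwartz function. Then ∫_ℝ |g(x)|² dx = 2π ∫_{−π}^{π} ∫_0^1 |ǧ(ξ, x)|² dx dξ, where ǧ is the Bloch transform of g. -/
open MeasureTheory

/-- The Fourier transform with the paper's normalization: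
`ĝ(z) = (1/(2π)) ∫_ℝ e^{-iωz} g(ω) dω`. -/
noncomputable def fourierT (g : ℝ → ℂ) (z : ℝ) : ℂ :=
  (1 / (2 * Real.pi)) * ∫ ω : ℝ, Complex.exp (-(Complex.I * ω * z)) * g ω

/-- The Bloch transform: `ǧ(ξ,x) = Σ_{k∈ℤ} e^{2πikx} ĝ(ξ + 2πk)`. -/
noncomputable def blochT (g : ℝ → ℂ) (ξ x : ℝ) : ℂ :=
  ∑' k : ℤ, Complex.exp (2 * Real.pi * Complex.I * k * x) * fourierT g (ξ + 2 * Real.pi * k)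

/-!
For fixed `ξ`, `x ↦ ǧ(ξ, x)` is a Fourier series on the unit circle whose coefficients
`ĝ(ξ + 2πk)` are absolutely summable (`ĝ` is a rescaled Schwartz function), so Parseval's identity
gives `∫₀¹ |ǧ(ξ, x)|² dx = ∑ₖ |ĝ(ξ + 2πk)|²`. Integrating over `ξ ∈ [-π, π]` unfolds this
periodization into `∫_ℝ |ĝ|²`, which Plancherel's theorem (after the change of variables
`z = 2πζ` relating `ĝ` to Mathlib's `𝓕 g`) identifies with `(2π)⁻¹ ∫_ℝ |g|²`.
-/

open Set Real FourierTransform SchwartzMap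

section Periodization

variable {E : Type*} [NormedAddCommGroup E] [NormedSpace ℝ E] {f : ℝ → E} {p : ℝ}

theorem MeasureTheory.Integrable.hasSum_intervalIntegral_comp_add_mul (hf : Integrable f)
    (hp : 0 < p) (a : ℝ) :
    HasSum (fun n : ℤ => ∫ x in a..a + p, f (x + p * n)) (∫ x, f x) := by
  have h := hasSum_integral_iUnion (fun n : ℤ => measurableSet_Ioc)
    (pairwise_disjoint_Ioc_add_zsmul a p) hf.integrableOn
  rw [iUnion_Ioc_add_zsmul hp, setIntegral_univ] at h
  convert h using 2 with n
  rw [intervalIntegral.integral_comp_add_right, intervalIntegral.integral_of_le (by linarith)]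
  congr 3 <;> simp only [zsmul_eq_mul, Int.cast_add, Int.cast_one] <;> ring

theorem MeasureTheory.Integrable.integral_Ioc_tsum_comp_add_mul [CompleteSpace E]
    (hf : Integrable f) (hp : 0 < p) (a : ℝ) :
    ∫ x in Ioc a (a + p), ∑' n : ℤ, f (x + p * n) = ∫ x, f x := by
  have hle : a ≤ a + p := by linarith
  rw [← integral_tsum_of_summable_integral_norm
    (fun n => (hf.comp_add_right _).integrableOn)]
  · simpa only [intervalIntegral.integral_of_le hle]
      using (hf.hasSum_intervalIntegral_comp_add_mul hp a).tsum_eq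
  · simpa only [intervalIntegral.integral_of_le hle]
      using (hf.norm.hasSum_intervalIntegral_comp_add_mul hp a).summable

end Periodization

section FourierSeries

open AddCircle

variable {T : ℝ} [hT : Fact (0 < T)]

theorem fourierCoeff_tsum_smul_fourier {c : ℤ → ℂ} (hc : Summable c) (n : ℤ) :
    fourierCoeff (fun t : AddCircle T => ∑' k, c k • fourier k t) n = c n := by
  have hint : ∀ k, Integrable (fun t : AddCircle T => fourier (-n) t • c k • fourier k t)
      haarAddCircle := fun k =>
    (by fun_prop : Continuous _).integrable_of_hasCompactSupport
      (HasCompactSupport.of_compactSpace _)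
  simp_rw [fourierCoeff, ← tsum_const_smul'' (fourier (-n) _)]
  rw [← integral_tsum_of_summable_integral_norm hint]
  · simp_rw [smul_comm (fourier (-n) _) (c _), integral_smul]
    have hcoeff : ∀ k, ∫ t : AddCircle T, fourier (-n) t • fourier k t ∂haarAddCircle
        = Pi.single (M := fun _ => ℂ) k 1 n := fun k => congrFun (fourierCoeff_fourier k) n
    simp_rw [hcoeff, Pi.single_apply, smul_ite, smul_zero, smul_eq_mul, mul_one]
    exact tsum_ite_eq' n c
  · simpa [norm_smul, Circle.norm_coe] using hc.norm

theorem integral_norm_sq_tsum_smul_fourier {c : ℤ → ℂ} (hc : Summable c) :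
    ∫ t : AddCircle T, ‖∑' k, c k • fourier k t‖ ^ 2 ∂haarAddCircle = ∑' k, ‖c k‖ ^ 2 := by
  let F : C(AddCircle T, ℂ) := ⟨fun t => ∑' k, c k • fourier k t,
    continuous_tsum (fun k => by fun_prop) hc.norm fun k t => by simp [Circle.norm_coe]⟩
  have hcoeff (n : ℤ) : fourierCoeff (ContinuousMap.toLp 2 haarAddCircle ℂ F) n = c n := by
    rw [fourierCoeff_toLp]
    exact fourierCoeff_tsum_smul_fourier hc n
  calc _ = ∫ t, ‖ContinuousMap.toLp 2 haarAddCircle ℂ F t‖ ^ 2 ∂haarAddCircle := by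
        refine integral_congr_ae ?_
        filter_upwards [ContinuousMap.coeFn_toLp (p := 2) (𝕜 := ℂ) haarAddCircle F] with t ht
        rw [ht]
        rfl
    _ = _ := by simp only [← tsum_sq_fourierCoeff, hcoeff]

theorem integral_Ioc_norm_sq_tsum_mul_exp {c : ℤ → ℂ} (hc : Summable c) (a : ℝ) :
    ∫ x in Ioc a (a + T), ‖∑' k : ℤ, c k * Complex.exp (2 * π * Complex.I * k * x / T)‖ ^ 2
      = T * ∑' k, ‖c k‖ ^ 2 := by
  rw [← integral_norm_sq_tsum_smul_fourier (T := T) hc, integral_haarAddCircle, smul_eq_mul,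
    mul_inv_cancel_left₀ hT.out.ne', ← AddCircle.integral_preimage T a]
  simp_rw [fourier_coe_apply, smul_eq_mul]

end FourierSeries

theorem SchwartzMap.summable_comp_add_intCast {E : Type*} [NormedAddCommGroup E]
    [NormedSpace ℝ E] [CompleteSpace E] (φ : 𝓢(ℝ, E)) (a : ℝ) :
    Summable fun k : ℤ => φ (a + k) := by
  have h := summable_of_isBigO (Real.summable_abs_int_rpow one_lt_two)
    (((φ.compSubConstCLM ℝ (-a)).isBigO_cocompact_rpow (-2)).comp_tendsto
      Int.tendsto_coe_cofinite)
  simpa [Function.comp_def, add_comm] using h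

theorem fourierT_eq_fourier (g : ℝ → ℂ) (z : ℝ) :
    fourierT g z = (2 * π : ℂ)⁻¹ * 𝓕 g (z / (2 * π)) := by
  rw [fourierT, fourier_real_eq_integral_exp_smul, one_div]
  congr 2 with ω
  rw [smul_eq_mul]
  congr 2
  field_simp
  push_cast
  ring

theorem summable_fourierT_comp_add (g : 𝓢(ℝ, ℂ)) (ξ : ℝ) :
    Summable fun k : ℤ => fourierT g (ξ + 2 * π * k) := by
  have h := ((𝓕 g).summable_comp_add_intCast (ξ / (2 * π))).mul_left (2 * π : ℂ)⁻¹
  refine h.congr fun k => ?_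
  rw [fourierT_eq_fourier, fourier_coe]
  congr 2
  field_simp

theorem integrable_norm_sq_fourierT (g : 𝓢(ℝ, ℂ)) :
    Integrable fun z => ‖fourierT g z‖ ^ 2 := by
  simp_rw [fourierT_eq_fourier, norm_mul, mul_pow, ← fourier_coe]
  exact ((((𝓕 g).memLp 2).integrable_norm_pow two_ne_zero).comp_div
    two_pi_pos.ne').const_mul _

theorem integral_norm_sq_fourierT (g : 𝓢(ℝ, ℂ)) :
    ∫ z, ‖fourierT g z‖ ^ 2 = (2 * π)⁻¹ * ∫ x, ‖g x‖ ^ 2 := by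
  simp_rw [fourierT_eq_fourier, norm_mul, mul_pow, ← fourier_coe]
  rw [integral_const_mul, Measure.integral_comp_div (fun u => ‖𝓕 g u‖ ^ 2),
    integral_norm_sq_fourier, smul_eq_mul, abs_of_pos two_pi_pos]
  have hnorm : ‖(2 * π : ℂ)⁻¹‖ = (2 * π)⁻¹ := by
    rw [norm_inv, ← Complex.ofReal_ofNat, ← Complex.ofReal_mul,
      Complex.norm_of_nonneg two_pi_pos.le]
  rw [hnorm]
  field_simp

theorem integral_Icc_norm_sq_blochT {g : ℝ → ℂ} {ξ : ℝ}
    (hg : Summable fun k : ℤ => fourierT g (ξ + 2 * π * k)) :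
    ∫ x in Icc (0 : ℝ) 1, ‖blochT g ξ x‖ ^ 2 = ∑' k : ℤ, ‖fourierT g (ξ + 2 * π * k)‖ ^ 2 := by
  have h := integral_Ioc_norm_sq_tsum_mul_exp (T := 1) hg 0
  simp only [zero_add, Complex.ofReal_one, div_one, one_mul] at h
  rw [integral_Icc_eq_integral_Ioc, ← h]
  simp_rw [blochT, mul_comm (Complex.exp _)]

/-- Parseval identity for the Bloch transform, eq. (psvl).
For Schwartz `g`, `∫_ℝ |g|² = 2π ∫_{-π}^{π} ∫_0^1 |ǧ(ξ,x)|² dx dξ`. -/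
theorem stmt_4 (g : SchwartzMap ℝ ℂ) :
    (∫ x : ℝ, ‖g x‖ ^ 2)
      = 2 * Real.pi * ∫ ξ in Set.Icc (-Real.pi) Real.pi,
          ∫ x in Set.Icc (0:ℝ) 1, ‖blochT (fun y => g y) ξ x‖ ^ 2 := by
  have hper := (integrable_norm_sq_fourierT g).integral_Ioc_tsum_comp_add_mul two_pi_pos (-π)
  rw [show -π + 2 * π = π by ring, integral_norm_sq_fourierT] at hper
  rw [setIntegral_congr_fun measurableSet_Icc
      fun ξ _ => integral_Icc_norm_sq_blochT (summable_fourierT_comp_add g ξ),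
    integral_Icc_eq_integral_Ioc, hper]
  field_simp
end

section
/- Let n ≥ 1, k̄ ≠ 0, c̄ ∈ ℝ, and let f: ℝⁿ → ℝⁿ be C². Let Ū: ℝ → ℝⁿ be three times continuously differentiable with k̄² Ū'' = k̄ ( (f∘Ū)' − c̄ Ū' ) on ℝ (a stationary solution of the system u_t + k̄(f(u)_x − c̄ u_x) = k̄² u_{xx}). Let I ⊆ ℝ be an open interval, let ũ: ℝ × I → ℝⁿ be C² and satisfy ũ_t + k̄( (f(ũ))_x − c̄ ũ_x ) = k̄² ũ_{xx} on ℝ × I, and let ψ: ℝ × I → ℝ be C² with ψ_x(x,t) ≠ 1 for all (x,t). Define v(x,t) := ũ(x − ψ(x,t), t) − Ū(x), the linear operator L w := k̄² w_{xx} + k̄ c̄ w_x − k̄ ∂_x( df(Ū) w ), and Q := −k̄ ( f(Ū+v) − f(Ū) − df(Ū) v ), R := −v ψ_t + k̄² v_x ψ_x/(1−ψ_x) + k̄² Ū' ψ_x²/(1−ψ_x), S := v ψ_x. Then pointwise on ℝ × I: ∂_t ( v + ψ Ū' ) − L ( v + ψ Ū' ) = ∂_x Q + ∂_x R + ∂_t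 S. -/
/-! Fix `t`, write `p = ũ(·, t)` and `y = x - ψ(x, t)`. Every term is a combination of
`p(y), p'(y), p''(y), ũ_t(y, t)`, of `ψ` and its derivatives up to order two at `(x, t)`
(with `ψ_xt = ψ_tx`), and of `Ū, …, Ū'''` at `x`. Since `v_x + ψ_x Ū' = (1 - ψ_x)(p'(y) - Ū')`,
the flux simplifies to `R = -ψ_t v + k̄² ψ_x (p'(y) - Ū')`, with no division left. The identity is
then `(1 - ψ_x)·(PDE for ũ at y) + (1 - ψ_x)·(profile equation) - ψ·(L Ū' = 0)`, where `L Ū' = 0`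
is the derivative of the profile equation (translation invariance). -/

open Function Filter Topology

section PartialDerivatives

variable {E : Type*} [NormedAddCommGroup E] [NormedSpace ℝ E] {F : ℝ → ℝ → E} {x t : ℝ}

theorem hasDerivAt_fst_of_differentiableAt_uncurry (hF : DifferentiableAt ℝ (uncurry F) (x, t)) :
    HasDerivAt (fun y => F y t) (fderiv ℝ (uncurry F) (x, t) (1, 0)) x :=
  hF.hasFDerivAt.comp_hasDerivAt (f := fun y => (y, t)) x
    ((hasDerivAt_id' x).prodMk (hasDerivAt_const x t))

theorem hasDerivAt_snd_of_differentiableAt_uncurry (hF : DifferentiableAt ℝ (uncurry F) (x, t)) :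
    HasDerivAt (fun s => F x s) (fderiv ℝ (uncurry F) (x, t) (0, 1)) t :=
  hF.hasFDerivAt.comp_hasDerivAt (f := fun s => (x, s)) t
    ((hasDerivAt_const t x).prodMk (hasDerivAt_id' t))

theorem hasDerivAt_uncurry_comp {g : ℝ → ℝ} {g' : ℝ} (hF : DifferentiableAt ℝ (uncurry F) (g t, t))
    (hg : HasDerivAt g g' t) :
    HasDerivAt (fun s => F (g s) s)
      (g' • deriv (fun y => F y t) (g t) + deriv (fun s => F (g t) s) t) t := by
  have h := hF.hasFDerivAt.comp_hasDerivAt (f := fun s => (g s, s)) t (hg.prodMk (hasDerivAt_id' t))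
  rw [(hasDerivAt_fst_of_differentiableAt_uncurry hF).deriv,
    (hasDerivAt_snd_of_differentiableAt_uncurry hF).deriv, ← map_smul, ← map_add]
  exact h.congr_deriv (by congr 1; ext <;> simp)

theorem ContDiffAt.hasDerivAt_deriv_fst (hF : ContDiffAt ℝ 2 (uncurry F) (x, t)) :
    HasDerivAt (fun s => deriv (fun y => F y s) x)
      (fderiv ℝ (fderiv ℝ (uncurry F)) (x, t) (0, 1) (1, 0)) t := by
  have hD : DifferentiableAt ℝ (fderiv ℝ (uncurry F)) (x, t) :=
    (hF.fderiv_right (m := 1) (by norm_num)).differentiableAt one_ne_zero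
  have hnear : ∀ᶠ s in 𝓝 t, DifferentiableAt ℝ (uncurry F) (x, s) :=
    (continuousAt_const.prodMk continuousAt_id).eventually
      ((hF.eventually (by simp)).mono fun _ h => h.differentiableAt two_ne_zero)
  have h := (hD.hasFDerivAt.comp_hasDerivAt (f := fun s => (x, s)) t
    ((hasDerivAt_const t x).prodMk (hasDerivAt_id t))).clm_apply
      (hasDerivAt_const t ((1 : ℝ), (0 : ℝ)))
  simp only [map_zero, add_zero] at h
  refine h.congr_of_eventuallyEq ?_
  filter_upwards [hnear] with s hs
  exact (hasDerivAt_fst_of_differentiableAt_uncurry hs).deriv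

theorem ContDiffAt.hasDerivAt_deriv_snd (hF : ContDiffAt ℝ 2 (uncurry F) (x, t)) :
    HasDerivAt (fun y => deriv (fun s => F y s) t)
      (fderiv ℝ (fderiv ℝ (uncurry F)) (x, t) (1, 0) (0, 1)) x := by
  have hD : DifferentiableAt ℝ (fderiv ℝ (uncurry F)) (x, t) :=
    (hF.fderiv_right (m := 1) (by norm_num)).differentiableAt one_ne_zero
  have hnear : ∀ᶠ y in 𝓝 x, DifferentiableAt ℝ (uncurry F) (y, t) :=
    (continuousAt_id.prodMk continuousAt_const).eventually
      ((hF.eventually (by simp)).mono fun _ h => h.differentiableAt two_ne_zero)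
  have h := (hD.hasFDerivAt.comp_hasDerivAt (f := fun y => (y, t)) x
    ((hasDerivAt_id x).prodMk (hasDerivAt_const x t))).clm_apply
      (hasDerivAt_const x ((0 : ℝ), (1 : ℝ)))
  simp only [map_zero, add_zero] at h
  refine h.congr_of_eventuallyEq ?_
  filter_upwards [hnear] with y hy
  exact (hasDerivAt_snd_of_differentiableAt_uncurry hy).deriv

theorem ContDiffAt.hasDerivAt_deriv_fst_of_deriv_snd (hF : ContDiffAt ℝ 2 (uncurry F) (x, t)) :
    HasDerivAt (fun s => deriv (fun y => F y s) x)
      (deriv (fun y => deriv (fun s => F y s) t) x) t := by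
  rw [hF.hasDerivAt_deriv_snd.deriv,
    (hF.isSymmSndFDerivAt (by simp [minSmoothness_of_isRCLikeNormedField])).eq]
  exact hF.hasDerivAt_deriv_fst

theorem deriv_fun_comp_eq_fderiv {E' : Type*} [NormedAddCommGroup E'] [NormedSpace ℝ E']
    {g : E → E'} {h : ℝ → E} (hg : DifferentiableAt ℝ g (h x)) (hh : DifferentiableAt ℝ h x) :
    deriv (fun y => g (h y)) x = fderiv ℝ g (h x) (deriv h x) :=
  fderiv_comp_deriv x hg hh

end PartialDerivatives

section ModulatedPerturbation

variable {E : Type*} [NormedAddCommGroup E] [NormedSpace ℝ E] {f : E → E} {U p v : ℝ → E}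
  {φ τ : ℝ → ℝ} {k c x : ℝ}

-- `L`, `Q` and `R` of the statement at a fixed time `t`, with `φ = ψ(·, t)` and `τ = ψ_t(·, t)`.
noncomputable def linearizedOp (k c : ℝ) (f : E → E) (U w : ℝ → E) (x : ℝ) : E :=
  k ^ 2 • deriv (deriv w) x + (k * c) • deriv w x - k • deriv (fun y => fderiv ℝ f (U y) (w y)) x

noncomputable def quadraticRemainder (k : ℝ) (f : E → E) (U v : ℝ → E) (z : ℝ) : E :=
  -(k • (f (U z + v z) - f (U z) - fderiv ℝ f (U z) (v z)))

noncomputable def modulationFlux (k : ℝ) (φ τ : ℝ → ℝ) (U v : ℝ → E) (z : ℝ) : E :=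
  -τ z • v z + (k ^ 2 * (deriv φ z / (1 - deriv φ z))) • deriv v z
    + (k ^ 2 * (deriv φ z ^ 2 / (1 - deriv φ z))) • deriv U z

theorem linearizedOp_eq_of_hasDerivAt {w w' : ℝ → E} {w'' : E}
    (hf : DifferentiableAt ℝ (fderiv ℝ f) (U x)) (hU : DifferentiableAt ℝ U x)
    (hw : ∀ z, HasDerivAt w (w' z) z) (hw' : HasDerivAt w' w'' x) :
    linearizedOp k c f U w x = k ^ 2 • w'' + (k * c) • w' x
      - k • (fderiv ℝ (fderiv ℝ f) (U x) (deriv U x) (w x) + fderiv ℝ f (U x) (w' x)) := by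
  have hA : HasDerivAt (fun y => fderiv ℝ f (U y)) (fderiv ℝ (fderiv ℝ f) (U x) (deriv U x)) x :=
    hf.hasFDerivAt.comp_hasDerivAt x hU.hasDerivAt
  rw [linearizedOp, funext fun z => (hw z).deriv, hw'.deriv, (hA.clm_apply (hw x)).deriv]

theorem linearizedOp_deriv_eq_zero (hf : ContDiff ℝ 2 f) (hU : ContDiff ℝ 3 U)
    (hUode : ∀ x, k ^ 2 • deriv (deriv U) x = k • (deriv (fun y => f (U y)) x - c • deriv U x))
    (x : ℝ) : linearizedOp k c f U (deriv U) x = 0 := by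
  have hf' : Differentiable ℝ (fderiv ℝ f) :=
    (hf.fderiv_right (m := 1) (by norm_num)).differentiable one_ne_zero
  have hU₁ : Differentiable ℝ U := hU.differentiable (by norm_num)
  have hU₂ : ContDiff ℝ 2 (deriv U) := hU.deriv'
  have hU₃ := hU₂.differentiable_deriv_two
  have hA : HasDerivAt (fun y => fderiv ℝ f (U y)) (fderiv ℝ (fderiv ℝ f) (U x) (deriv U x)) x :=
    (hf' (U x)).hasFDerivAt.comp_hasDerivAt x (hU₁ x).hasDerivAt
  have hode : ∀ y, k ^ 2 • deriv (deriv U) y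
      = k • (fderiv ℝ f (U y) (deriv U y) - c • deriv U y) := fun y => by
    rw [hUode, deriv_fun_comp_eq_fderiv (hf.differentiable (by norm_num) (U y)) (hU₁ y)]
  have hode' : HasDerivAt (fun y => k ^ 2 • deriv (deriv U) y)
      (k • (fderiv ℝ (fderiv ℝ f) (U x) (deriv U x) (deriv U x)
        + fderiv ℝ f (U x) (deriv (deriv U) x) - c • deriv (deriv U) x)) x := by
    rw [funext hode]
    exact ((hA.clm_apply (hU₂.differentiable two_ne_zero x).hasDerivAt).sub
      ((hU₂.differentiable two_ne_zero x).hasDerivAt.const_smul c)).const_smul k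
  have hU₃eq := hode'.unique ((hU₃ x).hasDerivAt.const_smul (k ^ 2))
  rw [linearizedOp_eq_of_hasDerivAt (hf' (U x)) (hU₁ x)
    (fun z => (hU₂.differentiable two_ne_zero z).hasDerivAt) (hU₃ x).hasDerivAt]
  linear_combination (norm := module) -hU₃eq

theorem hasDerivAt_comp_sub_self {g : ℝ → E} {z : ℝ} (hg : DifferentiableAt ℝ g (z - φ z))
    (hφ : DifferentiableAt ℝ φ z) :
    HasDerivAt (fun y => g (y - φ y)) ((1 - deriv φ z) • deriv g (z - φ z)) z :=
  hg.hasDerivAt.scomp z ((hasDerivAt_id' z).sub hφ.hasDerivAt)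

theorem hasDerivAt_of_eq_comp_sub_self (hp : Differentiable ℝ p) (hφ : Differentiable ℝ φ)
    (hU : Differentiable ℝ U) (hv : ∀ z, v z = p (z - φ z) - U z) (z : ℝ) :
    HasDerivAt v ((1 - deriv φ z) • deriv p (z - φ z) - deriv U z) z := by
  rw [funext hv]
  exact (hasDerivAt_comp_sub_self (hp _) (hφ z)).sub (hU z).hasDerivAt

theorem hasDerivAt_quadraticRemainder {U' v' : E} (hf : DifferentiableAt ℝ f (U x + v x))
    (hf₀ : DifferentiableAt ℝ f (U x)) (hf' : DifferentiableAt ℝ (fderiv ℝ f) (U x))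
    (hU : HasDerivAt U U' x) (hv : HasDerivAt v v' x) :
    HasDerivAt (quadraticRemainder k f U v)
      (-(k • (fderiv ℝ f (U x + v x) (U' + v') - fderiv ℝ f (U x) U'
        - (fderiv ℝ (fderiv ℝ f) (U x) U' (v x) + fderiv ℝ f (U x) v')))) x :=
  (((hf.hasFDerivAt.comp_hasDerivAt x (hU.add hv)).sub (hf₀.hasFDerivAt.comp_hasDerivAt x hU)).sub
    ((hf'.hasFDerivAt.comp_hasDerivAt x hU).clm_apply hv)).const_smul k |>.neg

theorem modulationFlux_eq (hp : Differentiable ℝ p) (hφ : Differentiable ℝ φ)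
    (hU : Differentiable ℝ U) (hv : ∀ z, v z = p (z - φ z) - U z) (hφx : ∀ z, deriv φ z ≠ 1) :
    modulationFlux k φ τ U v
      = fun z => -τ z • v z + (k ^ 2 * deriv φ z) • (deriv p (z - φ z) - deriv U z) := by
  funext z
  have ha : 1 - deriv φ z ≠ 0 := sub_ne_zero.mpr (hφx z).symm
  rw [modulationFlux, (hasDerivAt_of_eq_comp_sub_self hp hφ hU hv z).deriv]
  match_scalars <;> field_simp
  ring

/-- The statement at a fixed time `t`, for `p = ũ(·, t)` and `q = ũ_t(x - φ x, t)`. -/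
theorem perturbation_equation (hf : ContDiff ℝ 2 f) (hU : ContDiff ℝ 3 U)
    (hUode : ∀ x, k ^ 2 • deriv (deriv U) x = k • (deriv (fun y => f (U y)) x - c • deriv U x))
    (hp : ContDiff ℝ 2 p) (hφ : ContDiff ℝ 2 φ) (hφx : ∀ z, deriv φ z ≠ 1)
    (hτ : DifferentiableAt ℝ τ x) (hv : ∀ z, v z = p (z - φ z) - U z) {q : E}
    (hpde : q + k • (deriv (fun y => f (p y)) (x - φ x) - c • deriv p (x - φ x))
      = k ^ 2 • deriv (deriv p) (x - φ x)) :
    q - τ x • deriv p (x - φ x) + τ x • deriv U x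
        - linearizedOp k c f U (fun z => v z + φ z • deriv U z) x
      = deriv (quadraticRemainder k f U v) x + deriv (modulationFlux k φ τ U v) x
        + (deriv φ x • (q - τ x • deriv p (x - φ x)) + deriv τ x • v x) := by
  have hf₁ : Differentiable ℝ f := hf.differentiable two_ne_zero
  have hf₂ : Differentiable ℝ (fderiv ℝ f) :=
    (hf.fderiv_right (m := 1) (by norm_num)).differentiable one_ne_zero
  have hU₁ : Differentiable ℝ U := hU.differentiable (by norm_num)
  have hU₂ : Differentiable ℝ (deriv U) := (hU.deriv' (n := 2)).differentiable two_ne_zero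
  have hU₃ : Differentiable ℝ (deriv (deriv U)) := (hU.deriv' (n := 2)).differentiable_deriv_two
  have hp₁ : Differentiable ℝ p := hp.differentiable two_ne_zero
  have hφ₁ : Differentiable ℝ φ := hφ.differentiable two_ne_zero
  have hv' := hasDerivAt_of_eq_comp_sub_self hp₁ hφ₁ hU₁ hv
  have hgap : ∀ z, HasDerivAt (fun z => deriv p (z - φ z) - deriv U z)
      ((1 - deriv φ z) • deriv (deriv p) (z - φ z) - deriv (deriv U) z) z := fun z =>
    (hasDerivAt_comp_sub_self (hp.differentiable_deriv_two _) (hφ₁ z)).sub (hU₂ z).hasDerivAt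
  have hw : ∀ z, HasDerivAt (fun z => v z + φ z • deriv U z)
      ((1 - deriv φ z) • (deriv p (z - φ z) - deriv U z) + φ z • deriv (deriv U) z) z := fun z =>
    ((hv' z).add ((hφ₁ z).hasDerivAt.smul (hU₂ z).hasDerivAt)).congr_deriv (by module)
  have hw' := (((hasDerivAt_const x (1 : ℝ)).sub (hφ.differentiable_deriv_two x).hasDerivAt).smul
    (hgap x)).add ((hφ₁ x).hasDerivAt.smul (hU₃ x).hasDerivAt)
  have hQ :=
    hasDerivAt_quadraticRemainder (k := k) (hf₁ _) (hf₁ _) (hf₂ _) (hU₁ x).hasDerivAt (hv' x)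
  have hR : HasDerivAt
      (fun z => -τ z • v z + (k ^ 2 * deriv φ z) • (deriv p (z - φ z) - deriv U z)) _ x :=
    (hτ.hasDerivAt.neg.smul (hv' x)).add
      (((hφ.differentiable_deriv_two x).hasDerivAt.const_mul (k ^ 2)).smul (hgap x))
  have hker := linearizedOp_deriv_eq_zero hf hU hUode x
  rw [linearizedOp_eq_of_hasDerivAt (hf₂ _) (hU₁ x) (fun z => (hU₂ z).hasDerivAt)
    (hU₃ x).hasDerivAt] at hker
  have hode := hUode x
  rw [deriv_fun_comp_eq_fderiv (hf₁ _) (hU₁ x)] at hode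
  rw [deriv_fun_comp_eq_fderiv (hf₁ _) (hp₁ _)] at hpde
  have hUv : U x + v x = p (x - φ x) := by rw [hv]; abel
  rw [linearizedOp_eq_of_hasDerivAt (hf₂ _) (hU₁ x) hw hw', hQ.deriv, hUv,
    modulationFlux_eq hp₁ hφ₁ hU₁ hv hφx, hR.deriv]
  simp only [map_add, map_sub, map_smul, Pi.sub_apply, Pi.neg_apply]
  linear_combination (norm := module) (1 - deriv φ x) • hpde + (1 - deriv φ x) • hode - φ x • hker

end ModulatedPerturbation

theorem stmt_11_general (n : ℕ) (kb : ℝ) (cb : ℝ)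
    (f : EuclideanSpace ℝ (Fin n) → EuclideanSpace ℝ (Fin n)) (hf : ContDiff ℝ 2 f)
    (Ub : ℝ → EuclideanSpace ℝ (Fin n)) (hUb : ContDiff ℝ 3 Ub)
    (hUode : ∀ x : ℝ, kb ^ 2 • deriv (deriv Ub) x
      = kb • (deriv (fun y => f (Ub y)) x - cb • deriv Ub x))
    (I : Set ℝ) (hIo : IsOpen I)
    (u : ℝ → ℝ → EuclideanSpace ℝ (Fin n))
    (hu : ContDiffOn ℝ 2 (fun pr : ℝ × ℝ => u pr.1 pr.2) (Set.univ ×ˢ I))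
    (hupde : ∀ x : ℝ, ∀ t ∈ I,
      deriv (fun s => u x s) t
          + kb • (deriv (fun y => f (u y t)) x - cb • deriv (fun y => u y t) x)
        = kb ^ 2 • deriv (fun y => deriv (fun z => u z t) y) x)
    (ψ : ℝ → ℝ → ℝ)
    (hψ : ContDiffOn ℝ 2 (fun pr : ℝ × ℝ => ψ pr.1 pr.2) (Set.univ ×ˢ I))
    (hψx : ∀ x : ℝ, ∀ t ∈ I, deriv (fun y => ψ y t) x ≠ 1)
    (v : ℝ → ℝ → EuclideanSpace ℝ (Fin n))
    (hv : ∀ x t, v x t = u (x - ψ x t) t - Ub x)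
    (L : (ℝ → EuclideanSpace ℝ (Fin n)) → ℝ → EuclideanSpace ℝ (Fin n))
    (hL : ∀ w x, L w x = kb ^ 2 • deriv (deriv w) x + (kb * cb) • deriv w x
      - kb • deriv (fun y => fderiv ℝ f (Ub y) (w y)) x)
    (Q R S : ℝ → ℝ → EuclideanSpace ℝ (Fin n))
    (hQ : ∀ x t, Q x t = -(kb • (f (Ub x + v x t) - f (Ub x) - fderiv ℝ f (Ub x) (v x t))))
    (hR : ∀ x t, R x t = -(deriv (fun s => ψ x s) t) • v x t
      + (kb ^ 2 * (deriv (fun y => ψ y t) x / (1 - deriv (fun y => ψ y t) x))) •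
          deriv (fun y => v y t) x
      + (kb ^ 2 * ((deriv (fun y => ψ y t) x) ^ 2 / (1 - deriv (fun y => ψ y t) x))) •
          deriv Ub x)
    (hS : ∀ x t, S x t = (deriv (fun y => ψ y t) x) • v x t) :
    ∀ x : ℝ, ∀ t ∈ I,
      deriv (fun s => v x s + ψ x s • deriv Ub x) t
          - L (fun y => v y t + ψ y t • deriv Ub y) x
        = deriv (fun y => Q y t) x + deriv (fun y => R y t) x + deriv (fun s => S x s) t := by
  intro x t ht
  have hmem : ∀ y : ℝ, (y, t) ∈ Set.univ ×ˢ I := fun _ => ⟨trivial, ht⟩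
  have hnhds : ∀ y, Set.univ ×ˢ I ∈ 𝓝 (y, t) := fun y =>
    (isOpen_univ.prod hIo).mem_nhds (hmem y)
  have hψC := hψ.contDiffAt (hnhds x)
  have hψt : HasDerivAt (fun s => ψ x s) (deriv (fun s => ψ x s) t) t :=
    (hasDerivAt_snd_of_differentiableAt_uncurry
      (hψC.differentiableAt two_ne_zero)).differentiableAt.hasDerivAt
  have hvt : HasDerivAt (fun s => v x s) (deriv (fun s => u (x - ψ x t) s) t
      - deriv (fun s => ψ x s) t • deriv (fun y => u y t) (x - ψ x t)) t := by
    rw [funext (hv x)]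
    exact ((hasDerivAt_uncurry_comp ((hu.contDiffAt (hnhds _)).differentiableAt two_ne_zero)
      ((hasDerivAt_const t x).sub hψt)).sub_const (Ub x)).congr_deriv (by module)
  have hwt : HasDerivAt (fun s => v x s + ψ x s • deriv Ub x) _ t :=
    hvt.add (hψt.smul_const (deriv Ub x))
  have hSt : HasDerivAt (fun s => S x s) _ t :=
    (hψC.hasDerivAt_deriv_fst_of_deriv_snd.smul hvt).congr_of_eventuallyEq (.of_forall (hS x))
  rw [hwt.deriv, hSt.deriv, hL,
    show (fun y => Q y t) = quadraticRemainder kb f Ub (fun y => v y t) from funext (hQ · t),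
    show (fun y => R y t) = modulationFlux kb (fun y => ψ y t) (fun y => deriv (fun s => ψ y s) t)
      Ub (fun y => v y t) from funext (hR · t)]
  exact perturbation_equation hf hUb hUode (hu.comp_contDiff (by fun_prop) hmem)
    (hψ.comp_contDiff (by fun_prop) hmem) (hψx · t ht)
    hψC.hasDerivAt_deriv_snd.differentiableAt (hv · t) (hupde _ t ht)

/-- (Lemma `lem:canest`: the nonlinear perturbation equation
`(∂_t - L)(v + ψ Ū') = ∂_x Q + ∂_x R + ∂_t S` for the modulated perturbation
`v(x,t) = ũ(x - ψ(x,t), t) - Ū(x)` of a periodic traveling wave of the viscous system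
of conservation laws `u_t + k̄(f(u)_x - c̄ u_x) = k̄² u_{xx}`). -/
theorem stmt_11 (n : ℕ) (hn : 1 ≤ n) (kb : ℝ) (hkb : kb ≠ 0) (cb : ℝ)
    (f : EuclideanSpace ℝ (Fin n) → EuclideanSpace ℝ (Fin n)) (hf : ContDiff ℝ 2 f)
    (Ub : ℝ → EuclideanSpace ℝ (Fin n)) (hUb : ContDiff ℝ 3 Ub)
    (hUode : ∀ x : ℝ, kb ^ 2 • deriv (deriv Ub) x
      = kb • (deriv (fun y => f (Ub y)) x - cb • deriv Ub x))
    (I : Set ℝ) (hIo : IsOpen I) (hIc : I.OrdConnected)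
    (u : ℝ → ℝ → EuclideanSpace ℝ (Fin n))
    (hu : ContDiffOn ℝ 2 (fun pr : ℝ × ℝ => u pr.1 pr.2) (Set.univ ×ˢ I))
    (hupde : ∀ x : ℝ, ∀ t ∈ I,
      deriv (fun s => u x s) t
          + kb • (deriv (fun y => f (u y t)) x - cb • deriv (fun y => u y t) x)
        = kb ^ 2 • deriv (fun y => deriv (fun z => u z t) y) x)
    (ψ : ℝ → ℝ → ℝ)
    (hψ : ContDiffOn ℝ 2 (fun pr : ℝ × ℝ => ψ pr.1 pr.2) (Set.univ ×ˢ I))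
    (hψx : ∀ x : ℝ, ∀ t ∈ I, deriv (fun y => ψ y t) x ≠ 1)
    (v : ℝ → ℝ → EuclideanSpace ℝ (Fin n))
    (hv : ∀ x t, v x t = u (x - ψ x t) t - Ub x)
    (L : (ℝ → EuclideanSpace ℝ (Fin n)) → ℝ → EuclideanSpace ℝ (Fin n))
    (hL : ∀ w x, L w x = kb ^ 2 • deriv (deriv w) x + (kb * cb) • deriv w x
      - kb • deriv (fun y => fderiv ℝ f (Ub y) (w y)) x)
    (Q R S : ℝ → ℝ → EuclideanSpace ℝ (Fin n))
    (hQ : ∀ x t, Q x t = -(kb • (f (Ub x + v x t) - f (Ub x) - fderiv ℝ f (Ub x) (v x t))))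
    (hR : ∀ x t, R x t = -(deriv (fun s => ψ x s) t) • v x t
      + (kb ^ 2 * (deriv (fun y => ψ y t) x / (1 - deriv (fun y => ψ y t) x))) •
          deriv (fun y => v y t) x
      + (kb ^ 2 * ((deriv (fun y => ψ y t) x) ^ 2 / (1 - deriv (fun y => ψ y t) x))) •
          deriv Ub x)
    (hS : ∀ x t, S x t = (deriv (fun y => ψ y t) x) • v x t) :
    ∀ x : ℝ, ∀ t ∈ I,
      deriv (fun s => v x s + ψ x s • deriv Ub x) t
          - L (fun y => v y t + ψ y t • deriv Ub y) x
        = deriv (fun y => Q y t) x + deriv (fun y => R y t) x + deriv (fun s => S x s) t :=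
  stmt_11_general n kb cb f hf Ub hUb hUode I hIo u hu hupde ψ hψ hψx v hv L hL Q R S hQ hR hS
end

section
/- For every σ > 0 and every y ∈ ℝ, the principal value integral p.v. ∫_ℝ e^{iξy} e^{−σξ²} (iξ)^{−1} dξ := lim_{ε→0⁺} ∫_{|ξ| ≥ ε} e^{iξy} e^{−σξ²} (iξ)^{−1} dξ exists and equals 2√π ∫_0^{y/(2√σ)} e^{−u²} du. In particular its modulus is at most π, uniformly in y ∈ ℝ and σ > 0. -/
open MeasureTheory Filter Topology Real

/-!
On the symmetric set `{ε ≤ |ξ|}` only the even part of the integrand contributes, and that even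
part is the real function `e^{-σξ²} sin(ξy)/ξ`. Since `|sin(ξy)/ξ| ≤ |y|`, this function is
integrable on all of `ℝ`, so the principal value is its full integral `F y`. Differentiating under
the integral sign, `F' y = ∫ e^{-σξ²} cos(ξy) dξ = √(π/σ) e^{-y²/(4σ)}` (the Fourier transform of
a Gaussian), and `F 0 = 0`. Substituting `t = 2√σ u` gives the error function, whose modulus is at
most `2√π ∫_0^∞ e^{-u²} du = π`.
-/


section NegSymmetric

variable {G E : Type*} [MeasurableSpace G] [AddGroup G] [MeasurableNeg G]
  [NormedAddCommGroup E] [NormedSpace ℝ E] {μ : Measure G} [μ.IsNegInvariant] {s : Set G}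

theorem setIntegral_comp_neg_of_neg_eq (hs : -s = s) (f : G → E) :
    ∫ x in s, f (-x) ∂μ = ∫ x in s, f x ∂μ := by
  have := (Measure.measurePreserving_neg μ).setIntegral_preimage_emb
    (MeasurableEquiv.neg G).measurableEmbedding f s
  change ∫ x in -s, f (-x) ∂μ = _ at this
  rwa [hs] at this

theorem setIntegral_eq_setIntegral_even_part (hs : -s = s) {f : G → E}
    (hf : IntegrableOn f s μ) :
    ∫ x in s, f x ∂μ = ∫ x in s, (2 : ℝ)⁻¹ • (f x + f (-x)) ∂μ := by
  have hf_neg : IntegrableOn (fun x => f (-x)) s μ := by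
    have := ((Measure.measurePreserving_neg μ).integrableOn_comp_preimage
      (MeasurableEquiv.neg G).measurableEmbedding).2 hf
    rwa [show Neg.neg ⁻¹' s = -s from rfl, hs] at this
  rw [integral_smul, integral_add hf hf_neg, setIntegral_comp_neg_of_neg_eq hs, ← two_smul ℝ,
    smul_smul, inv_mul_cancel₀ two_ne_zero, one_smul]

end NegSymmetric

theorem tendsto_setIntegral_le_abs_nhdsGT {E : Type*} [NormedAddCommGroup E] [NormedSpace ℝ E]
    {μ : Measure ℝ} [NullSingletonClass μ] {f : ℝ → E} (hf : Integrable f μ) :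
    Tendsto (fun ε => ∫ x in {x | ε ≤ |x|}, f x ∂μ) (𝓝[>] 0) (𝓝 (∫ x, f x ∂μ)) := by
  have hmeas (ε : ℝ) : MeasurableSet {x : ℝ | ε ≤ |x|} :=
    measurableSet_le measurable_const measurable_abs
  simp only [← integral_indicator (hmeas _)]
  refine tendsto_integral_filter_of_dominated_convergence (fun x => ‖f x‖)
    (.of_forall fun ε => hf.aestronglyMeasurable.indicator (hmeas ε))
    (.of_forall fun ε => .of_forall fun x => norm_indicator_le_norm_self _ _) hf.norm ?_
  filter_upwards [μ.ae_ne 0] with x hx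
  refine tendsto_const_nhds.congr' ?_
  filter_upwards [Ioo_mem_nhdsGT (abs_pos.2 hx)] with ε hε
  exact (Set.indicator_of_mem (s := {x : ℝ | ε ≤ |x|}) hε.2.le f).symm

section SinOverX

variable {w : ℝ → ℝ}

theorem abs_sin_mul_div_le (x y : ℝ) : |sin (x * y) / x| ≤ |y| := by
  rcases eq_or_ne x 0 with rfl | hx
  · simp
  rw [abs_div, div_le_iff₀ (abs_pos.2 hx), mul_comm, ← abs_mul]
  exact abs_sin_le_abs

theorem MeasureTheory.Integrable.mul_sin_mul_div (hw : Integrable w) (y : ℝ) :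
    Integrable fun x => w x * (sin (x * y) / x) := by
  refine (hw.norm.mul_const |y|).mono' (hw.aestronglyMeasurable.mul
    (by fun_prop : Measurable fun x : ℝ => sin (x * y) / x).aestronglyMeasurable) ?_
  refine .of_forall fun x => ?_
  rw [norm_mul, Real.norm_eq_abs (_ / _)]
  exact mul_le_mul_of_nonneg_left (abs_sin_mul_div_le x y) (norm_nonneg _)

theorem hasDerivAt_integral_mul_sin_mul_div (hw : Integrable w) (y₀ : ℝ) :
    HasDerivAt (fun y => ∫ x, w x * (sin (x * y) / x)) (∫ x, w x * cos (x * y₀)) y₀ := by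
  have hderiv : ∀ᵐ x, ∀ y ∈ Metric.ball y₀ 1,
      HasDerivAt (fun y => w x * (sin (x * y) / x)) (w x * cos (x * y)) y := by
    filter_upwards [volume.ae_ne 0] with x hx y _
    have := (((hasDerivAt_id y).const_mul x).sin.div_const x).const_mul (w x)
    simpa [mul_div_cancel_right₀ _ hx] using this
  refine (hasDerivAt_integral_of_dominated_loc_of_deriv_le (bound := fun x => ‖w x‖)
    (Metric.ball_mem_nhds y₀ one_pos) (.of_forall fun y => (hw.mul_sin_mul_div y).1)
    (hw.mul_sin_mul_div y₀) (hw.aestronglyMeasurable.mul (by fun_prop)) ?_ hw.norm hderiv).2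
  refine .of_forall fun x y _ => ?_
  rw [norm_mul, Real.norm_eq_abs (cos _)]
  exact mul_le_of_le_one_right (norm_nonneg _) (abs_cos_le_one _)

end SinOverX

theorem integral_exp_neg_mul_sq_mul_cos {b : ℝ} (hb : 0 < b) (t : ℝ) :
    ∫ x, exp (-b * x ^ 2) * cos (x * t) = √(π / b) * exp (-t ^ 2 / (4 * b)) := by
  have hb' : 0 < (b : ℂ).re := by simpa using hb
  have hint : Integrable fun x : ℝ =>
      Complex.exp (Complex.I * t * x) * Complex.exp (-b * x ^ 2) := by
    simpa [← Complex.exp_add, add_comm, mul_comm] using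
      integrable_cexp_quadratic hb' (Complex.I * t) 0
  have h := congrArg Complex.re (fourierIntegral_gaussian hb' t)
  have hre := integral_re hint
  simp only [RCLike.re_to_complex] at hre
  rw [← hre] at h
  convert h using 1
  · congr 1 with x
    rw [show Complex.I * t * x = ((x * t : ℝ) : ℂ) * Complex.I by push_cast; ring,
      show -(b : ℂ) * x ^ 2 = ((-b * x ^ 2 : ℝ) : ℂ) by push_cast; ring, ← Complex.ofReal_exp,
      Complex.re_mul_ofReal, Complex.exp_ofReal_mul_I_re, mul_comm]
  · rw [show (π : ℂ) / b = ((π / b : ℝ) : ℂ) by push_cast; rfl,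
      show (1 / 2 : ℂ) = ((1 / 2 : ℝ) : ℂ) by push_cast; rfl,
      ← Complex.ofReal_cpow (by positivity), ← sqrt_eq_rpow,
      show -(t : ℂ) ^ 2 / (4 * b) = ((-t ^ 2 / (4 * b) : ℝ) : ℂ) by push_cast; rfl,
      ← Complex.ofReal_exp, ← Complex.ofReal_mul, Complex.ofReal_re]

theorem integral_exp_neg_mul_sq_mul_sin_div {b : ℝ} (hb : 0 < b) (y : ℝ) :
    ∫ x, exp (-b * x ^ 2) * (sin (x * y) / x) =
      2 * √π * ∫ u in 0..y / (2 * √b), exp (-u ^ 2) := by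
  have hw := integrable_exp_neg_mul_sq hb
  have hc : 2 * √b ≠ 0 := by positivity
  have hrescale (t : ℝ) : -t ^ 2 / (4 * b) = -(t / (2 * √b)) ^ 2 := by
    rw [div_pow, mul_pow, sq_sqrt hb.le]; ring
  calc ∫ x, exp (-b * x ^ 2) * (sin (x * y) / x)
      = ∫ t in 0..y, √(π / b) * exp (-t ^ 2 / (4 * b)) := by
        have hderiv (t : ℝ) := integral_exp_neg_mul_sq_mul_cos hb t ▸
          hasDerivAt_integral_mul_sin_mul_div hw t
        rw [intervalIntegral.integral_eq_sub_of_hasDerivAt (fun t _ => hderiv t)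
          ((by fun_prop : Continuous _).intervalIntegrable _ _)]
        simp
    _ = 2 * √π * ∫ u in 0..y / (2 * √b), exp (-u ^ 2) := by
        simp only [hrescale, intervalIntegral.integral_const_mul,
          intervalIntegral.integral_comp_div (fun u => exp (-u ^ 2)) hc, zero_div, smul_eq_mul,
          sqrt_div' π hb.le]
        field_simp

theorem abs_intervalIntegral_exp_neg_sq_le (c : ℝ) :
    |∫ u in 0..c, exp (-u ^ 2)| ≤ √π / 2 := by
  have hnonneg {c : ℝ} (hc : 0 ≤ c) : |∫ u in 0..c, exp (-u ^ 2)| ≤ √π / 2 := by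
    have hint : IntegrableOn (fun u : ℝ => exp (-u ^ 2)) (Set.Ioi 0) := by
      simpa using (integrable_exp_neg_mul_sq one_pos).integrableOn
    rw [abs_of_nonneg (intervalIntegral.integral_nonneg hc fun u _ => (exp_pos _).le),
      intervalIntegral.integral_of_le hc]
    calc ∫ u in Set.Ioc 0 c, exp (-u ^ 2) ≤ ∫ u in Set.Ioi 0, exp (-u ^ 2) :=
          setIntegral_mono_set hint (.of_forall fun u => (exp_pos _).le)
            (.of_forall Set.Ioc_subset_Ioi_self)
      _ = √π / 2 := by simpa using integral_gaussian_Ioi 1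
  rcases le_total 0 c with hc | hc
  · exact hnonneg hc
  · have := intervalIntegral.integral_comp_neg (a := 0) (b := c) fun u => exp (-u ^ 2)
    simp only [neg_sq, neg_zero] at this
    rw [this, intervalIntegral.integral_symm, abs_neg]
    exact hnonneg (neg_nonneg.2 hc)

theorem setIntegral_abs_ge_cexp_mul_gaussian_div_eq_sin_div {σ : ℝ} (hσ : 0 < σ) (y : ℝ) {ε : ℝ}
    (hε : 0 < ε) :
    ∫ ξ in {ξ : ℝ | ε ≤ |ξ|},
        Complex.exp (Complex.I * ξ * y) * Complex.exp (-(σ * ξ ^ 2 : ℝ)) / (Complex.I * ξ) =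
      ((∫ ξ in {ξ : ℝ | ε ≤ |ξ|}, exp (-σ * ξ ^ 2) * (sin (ξ * y) / ξ) : ℝ) : ℂ) := by
  have hs : -{ξ : ℝ | ε ≤ |ξ|} = {ξ : ℝ | ε ≤ |ξ|} := by ext; simp
  have hint : IntegrableOn (fun ξ : ℝ =>
      Complex.exp (Complex.I * ξ * y) * Complex.exp (-(σ * ξ ^ 2 : ℝ)) / (Complex.I * ξ))
      {ξ : ℝ | ε ≤ |ξ|} := by
    refine Integrable.mono' ((integrable_exp_neg_mul_sq hσ).const_mul ε⁻¹).integrableOn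
      (by fun_prop : Measurable _).aestronglyMeasurable ?_
    refine (ae_restrict_iff' (measurableSet_le measurable_const measurable_abs)).2
      (.of_forall fun ξ (hξ : ε ≤ |ξ|) => ?_)
    rw [norm_div, norm_mul, Complex.norm_exp, ← Complex.ofReal_neg, Complex.norm_exp_ofReal,
      norm_mul, Complex.norm_I, Complex.norm_real, one_mul, Real.norm_eq_abs, neg_mul]
    have hre : (Complex.I * ξ * y).re = 0 := by simp
    rw [hre, exp_zero, one_mul, div_eq_inv_mul]
    exact mul_le_mul_of_nonneg_right (inv_anti₀ hε hξ) (exp_pos _).le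
  rw [setIntegral_eq_setIntegral_even_part hs hint, ← integral_complex_ofReal]
  congr 1 with ξ
  rcases eq_or_ne ξ 0 with rfl | hξ
  · simp -- both sides vanish at `ξ = 0` since `x / 0 = 0`
  rw [Complex.real_smul]
  push_cast [Complex.sin]
  field_simp
  rw [Complex.I_sq]
  ring

/-- the principal-value Gaussian kernel is an error function; used in
the proof of Proposition `greenbdsg`, estimate (finaleundiffcg):
`p.v. ∫_ℝ e^{iξy} e^{-σξ²} (iξ)⁻¹ dξ = 2√π ∫_0^{y/(2√σ)} e^{-u²} du`, and its modulus is
at most `π`, uniformly in `y ∈ ℝ` and `σ > 0`. -/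
theorem stmt_16 (σ : ℝ) (hσ : 0 < σ) (y : ℝ) :
    Filter.Tendsto
        (fun ε : ℝ => ∫ ξ in {ξ : ℝ | ε ≤ |ξ|},
          Complex.exp (Complex.I * ξ * y) * Complex.exp (-(σ * ξ ^ 2 : ℝ)) / (Complex.I * ξ))
        (nhdsWithin 0 (Set.Ioi 0))
        (nhds (Complex.ofReal
          (2 * Real.sqrt Real.pi *
            ∫ u in (0:ℝ)..(y / (2 * Real.sqrt σ)), Real.exp (-u ^ 2)))) ∧
      |2 * Real.sqrt Real.pi * ∫ u in (0:ℝ)..(y / (2 * Real.sqrt σ)), Real.exp (-u ^ 2)|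
        ≤ Real.pi := by
  constructor
  · have hlim := tendsto_setIntegral_le_abs_nhdsGT
      ((integrable_exp_neg_mul_sq hσ).mul_sin_mul_div y)
    rw [integral_exp_neg_mul_sq_mul_sin_div hσ y] at hlim
    refine ((Complex.continuous_ofReal.tendsto _).comp hlim).congr' ?_
    filter_upwards [self_mem_nhdsWithin] with ε hε
    exact (setIntegral_abs_ge_cexp_mul_gaussian_div_eq_sin_div hσ y hε).symm
  · rw [abs_mul, abs_of_pos (by positivity : (0 : ℝ) < 2 * √π)]
    calc 2 * √π * |∫ u in (0 : ℝ)..y / (2 * √σ), exp (-u ^ 2)| ≤ 2 * √π * (√π / 2) := by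
          gcongr; exact abs_intervalIntegral_exp_neg_sq_le _
      _ = π := by rw [mul_div_assoc', mul_assoc, mul_self_sqrt pi_nonneg]; ring
end

section
/- Let m ≥ 1, let I ⊆ ℝ be an open interval, let A, B: ℝ × I → ℝ^m be continuously differentiable functions satisfying the conservation law ∂_t A + ∂_x B = 0 pointwise on ℝ × I, and let Φ: ℝ × I → ℝ be twice continuously differentiable. Define Ã(x,t) := A(Φ(x,t), t) and B̃(x,t) := B(Φ(x,t), t). Then pointwise on ℝ × I: ∂_t ( (∂_x Φ) Ã ) + ∂_x ( B̃ − (∂_t Φ) Ã ) = 0. -/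
/-!
By the chain rule, both derivatives expand into the partial derivatives of `A`, `B` at
`(Φ(x,t), t)` and of `Φ` at `(x, t)`. The mixed derivatives `∂_t∂_xΦ` and `∂_x∂_tΦ` cancel by
symmetry of second derivatives, the terms `∂_xΦ ∂_tΦ ∂_xA` cancel directly, and what remains is
`∂_xΦ (∂_tA + ∂_xB)`, which vanishes by the conservation law at `(Φ(x,t), t)`.
-/

open Function Filter Topology

section Partials

variable {E : Type*} [NormedAddCommGroup E] [NormedSpace ℝ E]

theorem DifferentiableAt.hasDerivAt_uncurry_comp {f : ℝ → ℝ → E} {c d : ℝ → ℝ} {c' d' t : ℝ}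
    (hf : DifferentiableAt ℝ (uncurry f) (c t, d t)) (hc : HasDerivAt c c' t)
    (hd : HasDerivAt d d' t) :
    HasDerivAt (fun s => f (c s) (d s))
      (c' • fderiv ℝ (uncurry f) (c t, d t) (1, 0) + d' • fderiv ℝ (uncurry f) (c t, d t) (0, 1))
      t := by
  have hcd : ((c', d') : ℝ × ℝ) = c' • ((1, 0) : ℝ × ℝ) + d' • ((0, 1) : ℝ × ℝ) := by simp
  have h := hf.hasFDerivAt.comp_hasDerivAt t (hc.prodMk hd)
  rwa [hcd, map_add, map_smul, map_smul] at h

theorem DifferentiableAt.hasDerivAt_uncurry_left {f : ℝ → ℝ → E} {x t : ℝ}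
    (hf : DifferentiableAt ℝ (uncurry f) (x, t)) :
    HasDerivAt (fun y => f y t) (fderiv ℝ (uncurry f) (x, t) (1, 0)) x := by
  simpa using hf.hasDerivAt_uncurry_comp (hasDerivAt_id x) (hasDerivAt_const x t)

theorem DifferentiableAt.hasDerivAt_uncurry_right {f : ℝ → ℝ → E} {x t : ℝ}
    (hf : DifferentiableAt ℝ (uncurry f) (x, t)) :
    HasDerivAt (fun s => f x s) (fderiv ℝ (uncurry f) (x, t) (0, 1)) t := by
  simpa using hf.hasDerivAt_uncurry_comp (hasDerivAt_const t x) (hasDerivAt_id t)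

theorem deriv_left_eventuallyEq_fderiv_uncurry {f : ℝ → ℝ → E} {x t : ℝ}
    (hf : ∀ᶠ r in 𝓝 (x, t), DifferentiableAt ℝ (uncurry f) r) :
    (fun s => deriv (fun y => f y s) x) =ᶠ[𝓝 t] fun s => fderiv ℝ (uncurry f) (x, s) (1, 0) :=
  ((continuous_const.prodMk continuous_id).tendsto' t (x, t) rfl).eventually hf
    |>.mono fun _ hs => hs.hasDerivAt_uncurry_left.deriv

theorem deriv_right_eventuallyEq_fderiv_uncurry {f : ℝ → ℝ → E} {x t : ℝ}
    (hf : ∀ᶠ r in 𝓝 (x, t), DifferentiableAt ℝ (uncurry f) r) :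
    (fun y => deriv (fun s => f y s) t) =ᶠ[𝓝 x] fun y => fderiv ℝ (uncurry f) (y, t) (0, 1) :=
  ((continuous_id.prodMk continuous_const).tendsto' x (x, t) rfl).eventually hf
    |>.mono fun _ hy => hy.hasDerivAt_uncurry_right.deriv

end Partials

theorem ContDiffAt.fderiv_apply_comm {F E : Type*} [NormedAddCommGroup F] [NormedSpace ℝ F]
    [NormedAddCommGroup E] [NormedSpace ℝ E] {f : F → E} {p : F}
    (hf : ContDiffAt ℝ 2 f p) (v w : F) :
    fderiv ℝ (fun q => fderiv ℝ f q v) p w = fderiv ℝ (fun q => fderiv ℝ f q w) p v := by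
  have hD : DifferentiableAt ℝ (fderiv ℝ f) p :=
    (hf.fderiv_right (m := 1) le_rfl).differentiableAt one_ne_zero
  rw [fderiv_clm_apply hD (differentiableAt_const v),
    fderiv_clm_apply hD (differentiableAt_const w)]
  simpa using (hf.isSymmSndFDerivAt (by simp [minSmoothness_of_isRCLikeNormedField]) w v)

theorem conservation_law_change_of_variable {E : Type*} [NormedAddCommGroup E] [NormedSpace ℝ E]
    {A B : ℝ → ℝ → E} {Φ : ℝ → ℝ → ℝ} {x t : ℝ}
    (hA : DifferentiableAt ℝ (uncurry A) (Φ x t, t))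
    (hB : DifferentiableAt ℝ (uncurry B) (Φ x t, t))
    (hΦ : ContDiffAt ℝ 2 (uncurry Φ) (x, t))
    (hcons : deriv (fun s => A (Φ x t) s) t + deriv (fun y => B y t) (Φ x t) = 0) :
    deriv (fun s => deriv (fun y => Φ y s) x • A (Φ x s) s) t
      + deriv (fun y => B (Φ y t) t - deriv (fun s => Φ y s) t • A (Φ y t) t) x = 0 := by
  set Φ₁ : ℝ → ℝ → ℝ := fun a b => fderiv ℝ (uncurry Φ) (a, b) (1, 0)
  set Φ₂ : ℝ → ℝ → ℝ := fun a b => fderiv ℝ (uncurry Φ) (a, b) (0, 1)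
  have hΦ_near : ∀ᶠ r in 𝓝 (x, t), DifferentiableAt ℝ (uncurry Φ) r :=
    (hΦ.eventually (by simp)).mono fun _ h => h.differentiableAt two_ne_zero
  have hDΦ : DifferentiableAt ℝ (fderiv ℝ (uncurry Φ)) (x, t) :=
    (hΦ.fderiv_right (m := 1) (by norm_num)).differentiableAt one_ne_zero
  have hΦx : HasDerivAt (fun y => Φ y t) (Φ₁ x t) x := hΦ_near.self_of_nhds.hasDerivAt_uncurry_left
  have hΦt : HasDerivAt (fun s => Φ x s) (Φ₂ x t) t := hΦ_near.self_of_nhds.hasDerivAt_uncurry_right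
  have hΦxt : HasDerivAt (fun s => Φ₁ x s) (fderiv ℝ (uncurry Φ₁) (x, t) (0, 1)) t :=
    (hDΦ.clm_apply (differentiableAt_const _)).hasDerivAt_uncurry_right
  have hΦtx : HasDerivAt (fun y => Φ₂ y t) (fderiv ℝ (uncurry Φ₂) (x, t) (1, 0)) x :=
    (hDΦ.clm_apply (differentiableAt_const _)).hasDerivAt_uncurry_left
  have hAt := hA.hasDerivAt_uncurry_comp hΦt (hasDerivAt_id' t)
  have hAx := hA.hasDerivAt_uncurry_comp hΦx (hasDerivAt_const x t)
  have hBx := hB.hasDerivAt_uncurry_comp hΦx (hasDerivAt_const x t)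
  have hdensity := (hΦxt.fun_smul hAt).congr_of_eventuallyEq
    (f₁ := fun s => deriv (fun y => Φ y s) x • A (Φ x s) s) <|
    (deriv_left_eventuallyEq_fderiv_uncurry hΦ_near).mono fun s hs => by
      simp only [hs, Φ₁]
  have hflux := (hBx.fun_sub (hΦtx.fun_smul hAx)).congr_of_eventuallyEq
    (f₁ := fun y => B (Φ y t) t - deriv (fun s => Φ y s) t • A (Φ y t) t) <|
    (deriv_right_eventuallyEq_fderiv_uncurry hΦ_near).mono fun y hy => by
      simp only [hy, Φ₂]
  rw [hdensity.deriv, hflux.deriv]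
  rw [hA.hasDerivAt_uncurry_right.deriv, hB.hasDerivAt_uncurry_left.deriv] at hcons
  have hmixed : fderiv ℝ (uncurry Φ₁) (x, t) (0, 1) = fderiv ℝ (uncurry Φ₂) (x, t) (1, 0) :=
    hΦ.fderiv_apply_comm (1, 0) (0, 1)
  rw [hmixed, eq_neg_of_add_eq_zero_left hcons]
  module

theorem stmt_18_general (m : ℕ) (I : Set ℝ) (hIo : IsOpen I)
    (A B : ℝ → ℝ → EuclideanSpace ℝ (Fin m))
    (hA : ContDiffOn ℝ 1 (fun pr : ℝ × ℝ => A pr.1 pr.2) (Set.univ ×ˢ I))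
    (hB : ContDiffOn ℝ 1 (fun pr : ℝ × ℝ => B pr.1 pr.2) (Set.univ ×ˢ I))
    (hcons : ∀ x : ℝ, ∀ t ∈ I,
      deriv (fun s => A x s) t + deriv (fun y => B y t) x = 0)
    (Φ : ℝ → ℝ → ℝ)
    (hΦ : ContDiffOn ℝ 2 (fun pr : ℝ × ℝ => Φ pr.1 pr.2) (Set.univ ×ˢ I)) :
    ∀ x : ℝ, ∀ t ∈ I,
      deriv (fun s => deriv (fun y => Φ y s) x • A (Φ x s) s) t
        + deriv (fun y => B (Φ y t) t - deriv (fun s => Φ y s) t • A (Φ y t) t) x = 0 := by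
  intro x t ht
  have hU : ∀ y : ℝ, Set.univ ×ˢ I ∈ 𝓝 (y, t) := fun y =>
    (isOpen_univ.prod hIo).mem_nhds ⟨Set.mem_univ y, ht⟩
  exact conservation_law_change_of_variable ((hA.contDiffAt (hU _)).differentiableAt one_ne_zero)
    ((hB.contDiffAt (hU _)).differentiableAt one_ne_zero) (hΦ.contDiffAt (hU x))
    (hcons (Φ x t) t ht)

/-- transformation of a conservation law under a time-dependent change
of the spatial variable, Section `s:implicitchange`: if `∂_t A + ∂_x B = 0` on `ℝ × I`
and `Ã(x,t) = A(Φ(x,t),t)`, `B̃(x,t) = B(Φ(x,t),t)`, then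
`∂_t((∂_xΦ) Ã) + ∂_x(B̃ - (∂_tΦ) Ã) = 0` on `ℝ × I`. -/
theorem stmt_18 (m : ℕ) (hm : 1 ≤ m) (I : Set ℝ) (hIo : IsOpen I) (hIc : I.OrdConnected)
    (A B : ℝ → ℝ → EuclideanSpace ℝ (Fin m))
    (hA : ContDiffOn ℝ 1 (fun pr : ℝ × ℝ => A pr.1 pr.2) (Set.univ ×ˢ I))
    (hB : ContDiffOn ℝ 1 (fun pr : ℝ × ℝ => B pr.1 pr.2) (Set.univ ×ˢ I))
    (hcons : ∀ x : ℝ, ∀ t ∈ I,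
      deriv (fun s => A x s) t + deriv (fun y => B y t) x = 0)
    (Φ : ℝ → ℝ → ℝ)
    (hΦ : ContDiffOn ℝ 2 (fun pr : ℝ × ℝ => Φ pr.1 pr.2) (Set.univ ×ˢ I)) :
    ∀ x : ℝ, ∀ t ∈ I,
      deriv (fun s => deriv (fun y => Φ y s) x • A (Φ x s) s) t
        + deriv (fun y => B (Φ y t) t - deriv (fun s => Φ y s) t • A (Φ y t) t) x = 0 :=
  stmt_18_general m I hIo A B hA hB hcons Φ hΦ
end
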